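/- arXiv:2508.13988 — 3 statements merged into one kernel-verified Lean document; each statement's English description precedes it below -/
import Mathlib

section
/- Let C and D be adjacent diagonals of a d-complete poset P with minimal elements c and d respectively. Then at most one of c and d is a minimal element of P. -/
variable {P : Type*} [PartialOrder P]

/-- A subset `S` of a poset is convex if it contains every element lying
between two of its elements. -/
def IsConvexSet (S : Set P) : Prop :=
  ∀ a ∈ S, ∀ b ∈ S, ∀ x, a ≤ x → x ≤ b → x ∈ S

/-- `S` has the structure of (an order ideal of) `d_k(1)` with side elements `w`, `z`:
`w` and `z` are incomparable, every other element of `S` lies below both or above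
both of them, the elements below them (the tail) form a chain of `k - 2` elements,
and the elements above them (the neck) form a chain. -/
def DkStruct (k : ℕ) (S : Set P) (w z : P) : Prop :=
  3 ≤ k ∧ w ∈ S ∧ z ∈ S ∧ ¬ w ≤ z ∧ ¬ z ≤ w ∧
  (∀ x ∈ S, x = w ∨ x = z ∨ (x ≤ w ∧ x ≤ z) ∨ (w ≤ x ∧ z ≤ x)) ∧
  IsChain (· ≤ ·) {x ∈ S | x ≤ w ∧ x ≤ z} ∧
  IsChain (· ≤ ·) {x ∈ S | w ≤ x ∧ z ≤ x} ∧
  {x ∈ S | x ≤ w ∧ x ≤ z}.ncard = k - 2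

/-- The interval `[a, b]` is a `d_k`-interval (isomorphic to `d_k(1)`)
with side elements `w` and `z`. -/
def IsDkIntervalWith (k : ℕ) (a b w z : P) : Prop :=
  a ≤ b ∧ DkStruct k (Set.Icc a b) w z ∧
    {x ∈ Set.Icc a b | w ≤ x ∧ z ≤ x}.ncard = k - 2

/-- The interval `[a, b]` is a `d_k`-interval. -/
def IsDkInterval (k : ℕ) (a b : P) : Prop := ∃ w z, IsDkIntervalWith k a b w z

/-- The interval `[a, b]` is a `d`-interval. -/
def IsDInterval (a b : P) : Prop := ∃ k, IsDkInterval k a b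

/-- The interval `[a, b]` is a `d`-interval with side elements `w` and `z`. -/
def IsDIntervalWith (a b w z : P) : Prop := ∃ k, IsDkIntervalWith k a b w z

/-- `p` is a neck element of the `d`-interval `[a, b]`. -/
def IsNeckOf (p a b : P) : Prop :=
  ∃ k w z, IsDkIntervalWith k a b w z ∧ p ∈ Set.Icc a b ∧ w ≤ p ∧ z ≤ p

/-- `p` is a tail element of the `d`-interval `[a, b]`. -/
def IsTailOf (p a b : P) : Prop :=
  ∃ k w z, IsDkIntervalWith k a b w z ∧ p ∈ Set.Icc a b ∧ p ≤ w ∧ p ≤ z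

/-- `S` is a `d_k^-`-convex set: a convex subset isomorphic to `d_k(1)` minus
its maximum (so the neck has `k - 3` elements). -/
def IsDkMinusConvex (k : ℕ) (S : Set P) : Prop :=
  IsConvexSet S ∧ ∃ w z, DkStruct k S w z ∧
    {x ∈ S | w ≤ x ∧ z ≤ x}.ncard = k - 3

/-- Proctor's axioms for a d-complete poset:
(1) every `d_k^-`-convex set can be completed above to a `d_k`-interval;
(2) the maximum of any `d`-interval covers no element outside the interval;
(3) no two `d^-`-convex sets differ only in their minimal elements. -/
def IsDComplete (P : Type*) [PartialOrder P] : Prop :=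
  (∀ (k : ℕ) (S : Set P), IsDkMinusConvex k S →
      ∃ z, z ∉ S ∧ ∃ a, IsDkInterval k a z ∧ Set.Icc a z = insert z S) ∧
  (∀ a b : P, IsDInterval a b → ∀ x, x ⋖ b → x ∈ Set.Icc a b) ∧
  (∀ (k k' : ℕ) (S T : Set P), IsDkMinusConvex k S → IsDkMinusConvex k' T →
      ∀ s ∈ S, ∀ t ∈ T, (∀ x ∈ S, s ≤ x) → (∀ x ∈ T, t ≤ x) →
        S \ {s} = T \ {t} → S = T)

/-- Two elements are in the same diagonal: the equivalence relation generated by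
`p ∼ q` whenever `[p, q]` is a `d`-interval. -/
def DiagRel {P : Type*} [PartialOrder P] (a b : P) : Prop :=
  Relation.EqvGen (fun x y => IsDInterval x y) a b

/-- The setoid on `P` whose classes are the diagonals. -/
def diagSetoid (P : Type*) [PartialOrder P] : Setoid P :=
  ⟨DiagRel, Relation.EqvGen.is_equivalence _⟩

/-- `h` is the hook-vector function of the d-complete poset `P`, indexed by
diagonals (the quotient of `P` by `DiagRel`): if `p` is not a neck element of any
`d`-interval then `h p D` counts the elements of the diagonal `D` weakly below `p`;
and if `[p', p]` is a `d`-interval with side elements `w`, `z`, then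
`h p = h w + h z - h p'`. -/
def IsHookVector {P : Type*} [PartialOrder P]
    (h : P → Quotient (diagSetoid P) → ℤ) : Prop :=
  (∀ p : P, (¬ ∃ a b : P, IsNeckOf p a b) → ∀ D,
      h p D = ({r : P | Quotient.mk (diagSetoid P) r = D ∧ r ≤ p}).ncard) ∧
  (∀ p' p w z : P, IsDIntervalWith p' p w z → ∀ D,
      h p D = h w D + h z D - h p' D)

/-- A linear extension of `P`, as an enumeration `e 0 > e 1 > ⋯` refining the
partial order: each initial segment is an upper set. -/
def IsLinExt {P : Type*} [PartialOrder P] [Fintype P]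
    (e : Fin (Fintype.card P) ≃ P) : Prop :=
  ∀ i j, e i < e j → j < i


section DCompleteProofAux

private lemma chain_top' {s : Set P} (hc : IsChain (· ≤ ·) s) (hfin : s.Finite)
    (hne : s.Nonempty) : ∃ m ∈ s, ∀ x ∈ s, x ≤ m := by
  obtain ⟨m, hm, hmax⟩ := Set.Finite.exists_maximalFor id s hfin hne
  refine ⟨m, hm, fun x hx => ?_⟩
  rcases eq_or_ne x m with rfl | hxm
  · exact le_refl x
  · rcases hc hm hx (Ne.symm hxm) with h | h
    · exact hmax hx h
    · exact h

private lemma chain_bot' {s : Set P} (hc : IsChain (· ≤ ·) s) (hfin : s.Finite)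
    (hne : s.Nonempty) : ∃ m ∈ s, ∀ x ∈ s, m ≤ x := by
  obtain ⟨m, hm, hmin⟩ := Set.Finite.exists_minimalFor id s hfin hne
  refine ⟨m, hm, fun x hx => ?_⟩
  rcases eq_or_ne x m with rfl | hxm
  · exact le_refl x
  · rcases hc hm hx (Ne.symm hxm) with h | h
    · exact h
    · exact hmin hx h

private lemma dk_facts {k : ℕ} {a b w z : P} (h : IsDkIntervalWith k a b w z) :
    a < w ∧ a < z ∧ w < b ∧ z < b := by
  obtain ⟨hab, ⟨hk, hw, hz, hwz, hzw, hcl, htc, hnc, htcard⟩, hncard⟩ := h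
  obtain ⟨haw, hwb⟩ := hw
  obtain ⟨haz, hzb⟩ := hz
  refine ⟨lt_of_le_of_ne haw ?_, lt_of_le_of_ne haz ?_,
    lt_of_le_of_ne hwb ?_, lt_of_le_of_ne hzb ?_⟩
  · rintro rfl; exact hwz haz
  · rintro rfl; exact hzw haw
  · rintro rfl; exact hzw hzb
  · rintro rfl; exact hwz hwb

private lemma dk3_facts {a b w z : P} (h : IsDkIntervalWith 3 a b w z) :
    (∀ u ∈ Set.Icc a b, u ⋖ b → u = w ∨ u = z) ∧ a ⋖ w ∧ a ⋖ z ∧ w ⋖ b ∧ z ⋖ b ∧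
      Set.Icc a b \ {a, b} = {w, z} := by
  obtain ⟨haw, haz, hwb, hzb⟩ := dk_facts h
  obtain ⟨hab, ⟨hk, hw, hz, hwz, hzw, hcl, htc, hnc, htcard⟩, hncard⟩ := h
  rw [show (3:ℕ) - 2 = 1 from rfl] at htcard hncard
  have hamem : a ∈ {x ∈ Set.Icc a b | x ≤ w ∧ x ≤ z} := ⟨⟨le_refl a, hab⟩, haw.le, haz.le⟩
  have hbmem : b ∈ {x ∈ Set.Icc a b | w ≤ x ∧ z ≤ x} := ⟨⟨hab, le_refl b⟩, hwb.le, hzb.le⟩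
  obtain ⟨t0, ht0⟩ := Set.ncard_eq_one.mp htcard
  obtain ⟨n0, hn0⟩ := Set.ncard_eq_one.mp hncard
  have htail : ∀ x ∈ Set.Icc a b, x ≤ w → x ≤ z → x = a := by
    intro x hx h1 h2
    have hx' : x ∈ {y ∈ Set.Icc a b | y ≤ w ∧ y ≤ z} := ⟨hx, h1, h2⟩
    rw [ht0, Set.mem_singleton_iff] at hx'
    rw [ht0, Set.mem_singleton_iff] at hamem
    rw [hx', hamem]
  have hneck : ∀ x ∈ Set.Icc a b, w ≤ x → z ≤ x → x = b := by
    intro x hx h1 h2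
    have hx' : x ∈ {y ∈ Set.Icc a b | w ≤ y ∧ z ≤ y} := ⟨hx, h1, h2⟩
    rw [hn0, Set.mem_singleton_iff] at hx'
    rw [hn0, Set.mem_singleton_iff] at hbmem
    rw [hx', hbmem]
  have hcov : ∀ u ∈ Set.Icc a b, u ⋖ b → u = w ∨ u = z := by
    intro u hu hub
    rcases hcl u hu with rfl | rfl | ⟨h1, h2⟩ | ⟨h1, h2⟩
    · exact Or.inl rfl
    · exact Or.inr rfl
    · rw [htail u hu h1 h2] at hub
      exact (hub.2 haw hwb).elim
    · rw [hneck u hu h1 h2] at hub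
      exact (lt_irrefl b hub.1).elim
  have hawc : a ⋖ w := by
    refine ⟨haw, fun x hax hxw => ?_⟩
    have hx : x ∈ Set.Icc a b := ⟨hax.le, hxw.le.trans hwb.le⟩
    rcases hcl x hx with rfl | rfl | ⟨h1, h2⟩ | ⟨h1, h2⟩
    · exact lt_irrefl _ hxw
    · exact hzw hxw.le
    · rw [htail x hx h1 h2] at hax; exact lt_irrefl _ hax
    · exact hxw.not_ge h1
  have hazc : a ⋖ z := by
    refine ⟨haz, fun x hax hxz => ?_⟩
    have hx : x ∈ Set.Icc a b := ⟨hax.le, hxz.le.trans hzb.le⟩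
    rcases hcl x hx with rfl | rfl | ⟨h1, h2⟩ | ⟨h1, h2⟩
    · exact hwz hxz.le
    · exact lt_irrefl _ hxz
    · rw [htail x hx h1 h2] at hax; exact lt_irrefl _ hax
    · exact hxz.not_ge h2
  have hwbc : w ⋖ b := by
    refine ⟨hwb, fun x hwx hxb => ?_⟩
    have hx : x ∈ Set.Icc a b := ⟨haw.le.trans hwx.le, hxb.le⟩
    rcases hcl x hx with rfl | rfl | ⟨h1, h2⟩ | ⟨h1, h2⟩
    · exact lt_irrefl _ hwx
    · exact hwz hwx.le
    · exact hwx.not_ge h1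
    · rw [hneck x hx h1 h2] at hxb; exact lt_irrefl _ hxb
  have hzbc : z ⋖ b := by
    refine ⟨hzb, fun x hzx hxb => ?_⟩
    have hx : x ∈ Set.Icc a b := ⟨haz.le.trans hzx.le, hxb.le⟩
    rcases hcl x hx with rfl | rfl | ⟨h1, h2⟩ | ⟨h1, h2⟩
    · exact hzw hzx.le
    · exact lt_irrefl _ hzx
    · exact hzx.not_ge h2
    · rw [hneck x hx h1 h2] at hxb; exact lt_irrefl _ hxb
  have hint : Set.Icc a b \ {a, b} = {w, z} := by
    ext x
    simp only [Set.mem_diff, Set.mem_insert_iff, Set.mem_singleton_iff, not_or]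
    constructor
    · rintro ⟨hx, hxa, hxb⟩
      rcases hcl x hx with rfl | rfl | ⟨h1, h2⟩ | ⟨h1, h2⟩
      · exact Or.inl rfl
      · exact Or.inr rfl
      · exact absurd (htail x hx h1 h2) hxa
      · exact absurd (hneck x hx h1 h2) hxb
    · rintro (rfl | rfl)
      · exact ⟨hw, haw.ne', hwb.ne⟩
      · exact ⟨hz, haz.ne', hzb.ne⟩
  exact ⟨hcov, hawc, hazc, hwbc, hzbc, hint⟩

end DCompleteProofAux


section DCompleteProofAux2

private lemma dk_sub [Fintype P] {k : ℕ} {a b w z : P} (h : IsDkIntervalWith k a b w z)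
    (hk4 : 4 ≤ k) :
    ∃ t n : P, a ⋖ t ∧ n ⋖ b ∧ t ≤ w ∧ IsDkIntervalWith (k-1) t n w z ∧
      (∀ u ∈ Set.Icc a b, u ⋖ b → u = n) ∧ Set.Icc t n = Set.Icc a b \ {a, b} := by
  obtain ⟨haw, haz, hwb, hzb⟩ := dk_facts h
  obtain ⟨hab, ⟨hk, hw, hz, hwz, hzw, hcl, htc, hnc, htcard⟩, hncard⟩ := h
  have hamem : a ∈ {x ∈ Set.Icc a b | x ≤ w ∧ x ≤ z} := ⟨⟨le_refl a, hab⟩, haw.le, haz.le⟩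
  have hbmem : b ∈ {x ∈ Set.Icc a b | w ≤ x ∧ z ≤ x} := ⟨⟨hab, le_refl b⟩, hwb.le, hzb.le⟩
  have hTd : ({x ∈ Set.Icc a b | x ≤ w ∧ x ≤ z} \ {a}).ncard = k - 3 := by
    rw [Set.ncard_diff_singleton_of_mem hamem, htcard]
    omega
  have hNd : ({x ∈ Set.Icc a b | w ≤ x ∧ z ≤ x} \ {b}).ncard = k - 3 := by
    rw [Set.ncard_diff_singleton_of_mem hbmem, hncard]
    omega
  have hTne : ({x ∈ Set.Icc a b | x ≤ w ∧ x ≤ z} \ {a}).Nonempty :=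
    Set.nonempty_of_ncard_ne_zero (by rw [hTd]; omega)
  have hNne : ({x ∈ Set.Icc a b | w ≤ x ∧ z ≤ x} \ {b}).Nonempty :=
    Set.nonempty_of_ncard_ne_zero (by rw [hNd]; omega)
  obtain ⟨t, ht, htmin⟩ := chain_bot' (htc.mono Set.diff_subset) (Set.toFinite _) hTne
  obtain ⟨n, hn, hnmax⟩ := chain_top' (hnc.mono Set.diff_subset) (Set.toFinite _) hNne
  have htne : t ≠ a := by simpa using ht.2
  have hnne : n ≠ b := by simpa using hn.2
  have htw : t ≤ w := ht.1.2.1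
  have htz : t ≤ z := ht.1.2.2
  have hwn : w ≤ n := hn.1.2.1
  have hzn : z ≤ n := hn.1.2.2
  have hta : a < t := lt_of_le_of_ne ht.1.1.1 (Ne.symm htne)
  have hnb : n < b := lt_of_le_of_ne hn.1.1.2 hnne
  have htw' : t < w := lt_of_le_of_ne htw (fun e => hwz (by rw [← e]; exact htz))
  have hwn' : w < n := lt_of_le_of_ne hwn (fun e => hzw (by rw [e]; exact hzn))
  have hzn' : z < n := lt_of_le_of_ne hzn (fun e => hwz (by rw [e]; exact hwn))
  have hcov : ∀ u ∈ Set.Icc a b, u ⋖ b → u = n := by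
    intro u hu hub
    rcases hcl u hu with rfl | rfl | ⟨h1, h2⟩ | ⟨h1, h2⟩
    · exact (hub.2 hwn' hnb).elim
    · exact (hub.2 hzn' hnb).elim
    · exact (hub.2 (lt_of_le_of_lt h1 hwn') hnb).elim
    · have hun : u ∈ {x ∈ Set.Icc a b | w ≤ x ∧ z ≤ x} \ {b} :=
        ⟨⟨hu, h1, h2⟩, by simp [hub.1.ne]⟩
      have hle := hnmax u hun
      rcases eq_or_ne u n with rfl | hune
      · rfl
      · exact (hub.2 (lt_of_le_of_ne hle hune) hnb).elim
  have hatc : a ⋖ t := by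
    refine ⟨hta, fun x hax hxt => ?_⟩
    have hx : x ∈ Set.Icc a b := ⟨hax.le, (hxt.le.trans htw).trans hwb.le⟩
    rcases hcl x hx with rfl | rfl | ⟨h1, h2⟩ | ⟨h1, h2⟩
    · exact hxt.not_ge htw
    · exact hxt.not_ge htz
    · exact hxt.not_ge (htmin x ⟨⟨hx, h1, h2⟩, by simp [hax.ne']⟩)
    · exact lt_irrefl w (lt_of_le_of_lt h1 (hxt.trans_le htw))
  have hnbc : n ⋖ b := by
    refine ⟨hnb, fun x hnx hxb => ?_⟩
    have hx : x ∈ Set.Icc a b := ⟨(haw.le.trans hwn).trans hnx.le, hxb.le⟩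
    rcases hcl x hx with rfl | rfl | ⟨h1, h2⟩ | ⟨h1, h2⟩
    · exact hnx.not_ge hwn
    · exact hnx.not_ge hzn
    · exact (hnx.trans_le (h1.trans hwn)).false
    · exact hnx.not_ge (hnmax x ⟨⟨hx, h1, h2⟩, by simp [hxb.ne]⟩)
  have hIccsub : Set.Icc t n ⊆ Set.Icc a b := fun x hx =>
    ⟨hta.le.trans hx.1, hx.2.trans hnb.le⟩
  have hIcc : Set.Icc t n = Set.Icc a b \ {a, b} := by
    ext x
    simp only [Set.mem_diff, Set.mem_insert_iff, Set.mem_singleton_iff, not_or]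
    constructor
    · intro hx
      exact ⟨hIccsub hx, (hta.trans_le hx.1).ne', (hx.2.trans_lt hnb).ne⟩
    · rintro ⟨hx, hxa, hxb⟩
      rcases hcl x hx with rfl | rfl | ⟨h1, h2⟩ | ⟨h1, h2⟩
      · exact ⟨htw, hwn⟩
      · exact ⟨htz, hzn⟩
      · exact ⟨htmin x ⟨⟨hx, h1, h2⟩, by simp [hxa]⟩, h1.trans hwn⟩
      · exact ⟨htw.trans h1, hnmax x ⟨⟨hx, h1, h2⟩, by simp [hxb]⟩⟩
  have hTeq : {x ∈ Set.Icc t n | x ≤ w ∧ x ≤ z} =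
      {x ∈ Set.Icc a b | x ≤ w ∧ x ≤ z} \ {a} := by
    ext x
    simp only [Set.mem_setOf_eq, Set.mem_diff, Set.mem_singleton_iff]
    constructor
    · rintro ⟨hx, h1, h2⟩
      exact ⟨⟨hIccsub hx, h1, h2⟩, (hta.trans_le hx.1).ne'⟩
    · rintro ⟨⟨hx, h1, h2⟩, hxa⟩
      exact ⟨⟨htmin x ⟨⟨hx, h1, h2⟩, by simp [hxa]⟩, h1.trans hwn⟩, h1, h2⟩
  have hNeq : {x ∈ Set.Icc t n | w ≤ x ∧ z ≤ x} =
      {x ∈ Set.Icc a b | w ≤ x ∧ z ≤ x} \ {b} := by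
    ext x
    simp only [Set.mem_setOf_eq, Set.mem_diff, Set.mem_singleton_iff]
    constructor
    · rintro ⟨hx, h1, h2⟩
      exact ⟨⟨hIccsub hx, h1, h2⟩, (hx.2.trans_lt hnb).ne⟩
    · rintro ⟨⟨hx, h1, h2⟩, hxb⟩
      exact ⟨⟨htw.trans h1, hnmax x ⟨⟨hx, h1, h2⟩, by simp [hxb]⟩⟩, h1, h2⟩
  refine ⟨t, n, hatc, hnbc, htw, ⟨htw.trans hwn, ⟨by omega, ⟨htw, hwn⟩, ⟨htz, hzn⟩,
    hwz, hzw, fun x hx => hcl x (hIccsub hx),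
    hTeq ▸ (htc.mono Set.diff_subset), hNeq ▸ (hnc.mono Set.diff_subset),
    by rw [hTeq, hTd]; omega⟩, by rw [hNeq, hNd]; omega⟩, hcov, hIcc⟩

private lemma dk_minusTop [Fintype P] {k : ℕ} {a b w z : P} (h : IsDkIntervalWith k a b w z) :
    IsDkMinusConvex k (Set.Icc a b \ {b}) := by
  obtain ⟨haw, haz, hwb, hzb⟩ := dk_facts h
  obtain ⟨hab, ⟨hk, hw, hz, hwz, hzw, hcl, htc, hnc, htcard⟩, hncard⟩ := h
  have hbN : b ∈ {x ∈ Set.Icc a b | w ≤ x ∧ z ≤ x} := ⟨⟨hab, le_refl b⟩, hwb.le, hzb.le⟩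
  have htods : {x ∈ Set.Icc a b \ {b} | x ≤ w ∧ x ≤ z} =
      {x ∈ Set.Icc a b | x ≤ w ∧ x ≤ z} := by
    ext x
    simp only [Set.mem_setOf_eq, Set.mem_diff, Set.mem_singleton_iff]
    constructor
    · rintro ⟨⟨hx, _⟩, h1, h2⟩; exact ⟨hx, h1, h2⟩
    · rintro ⟨hx, h1, h2⟩
      refine ⟨⟨hx, fun e => ?_⟩, h1, h2⟩
      rw [e] at h1; exact hwb.not_ge h1
  have hnods : {x ∈ Set.Icc a b \ {b} | w ≤ x ∧ z ≤ x} =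
      {x ∈ Set.Icc a b | w ≤ x ∧ z ≤ x} \ {b} := by
    ext x
    simp only [Set.mem_setOf_eq, Set.mem_diff, Set.mem_singleton_iff]
    tauto
  refine ⟨?_, w, z, ⟨hk, ⟨hw, by simp [hwb.ne]⟩, ⟨hz, by simp [hzb.ne]⟩, hwz, hzw,
    fun x hx => hcl x hx.1, htods ▸ htc, hnods ▸ (hnc.mono Set.diff_subset),
    htods ▸ htcard⟩, ?_⟩
  · intro x hx y hy u hxu huy
    refine ⟨⟨hx.1.1.trans hxu, huy.trans hy.1.2⟩, fun e => hy.2 ?_⟩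
    have hby : b ≤ y := by rw [← Set.mem_singleton_iff.mp e]; exact huy
    exact Set.mem_singleton_iff.mpr (le_antisymm hy.1.2 hby)
  · rw [hnods, Set.ncard_diff_singleton_of_mem hbN, hncard]
    omega

end DCompleteProofAux2


section DCompleteProofAux3

private lemma bottom_unique [Fintype P] (hP : IsDComplete P) :
    ∀ k k' : ℕ, ∀ a a' b w z w' z' : P, IsDkIntervalWith k a b w z →
      IsDkIntervalWith k' a' b w' z' → a = a' := by
  intro k
  induction k using Nat.strong_induction_on with
  | _ k IH =>
  intro k' a a' b w z w' z' h h'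
  have hk3 : 3 ≤ k := h.2.1.1
  have hk3' : 3 ≤ k' := h'.2.1.1
  have key : Set.Icc a b \ {a, b} = Set.Icc a' b \ {a', b} → a = a' := by
    intro hint
    have hS := dk_minusTop h
    have hT := dk_minusTop h'
    have hab : a < b := (dk_facts h).1.trans (dk_facts h).2.2.1
    have hab' : a' < b := (dk_facts h').1.trans (dk_facts h').2.2.1
    have haS : a ∈ Set.Icc a b \ {b} := ⟨⟨le_refl a, hab.le⟩, by simp [hab.ne]⟩
    have haT : a' ∈ Set.Icc a' b \ {b} := ⟨⟨le_refl a', hab'.le⟩, by simp [hab'.ne]⟩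
    have minS : ∀ x ∈ Set.Icc a b \ {b}, a ≤ x := fun x hx => hx.1.1
    have minT : ∀ x ∈ Set.Icc a' b \ {b}, a' ≤ x := fun x hx => hx.1.1
    have e1 : (Set.Icc a b \ {b}) \ {a} = Set.Icc a b \ {a, b} := by
      ext x
      simp only [Set.mem_diff, Set.mem_singleton_iff, Set.mem_insert_iff, not_or]
      tauto
    have e2 : (Set.Icc a' b \ {b}) \ {a'} = Set.Icc a' b \ {a', b} := by
      ext x
      simp only [Set.mem_diff, Set.mem_singleton_iff, Set.mem_insert_iff, not_or]
      tauto
    have hST : (Set.Icc a b \ {b}) \ {a} = (Set.Icc a' b \ {b}) \ {a'} := by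
      rw [e1, e2]; exact hint
    have hEq := hP.2.2 k k' _ _ hS hT a haS a' haT minS minT hST
    have h1 : a ≤ a' := minS a' (by rw [hEq]; exact haT)
    have h2 : a' ≤ a := minT a (by rw [← hEq]; exact haS)
    exact le_antisymm h1 h2
  rcases Nat.lt_or_ge k 4 with hklt | hk4 <;> rcases Nat.lt_or_ge k' 4 with hklt' | hk4'
  · have e : k = 3 := by omega
    have e' : k' = 3 := by omega
    subst e; subst e'
    obtain ⟨hcov, _, _, hwbc, hzbc, hIcc⟩ := dk3_facts h
    obtain ⟨hcov', _, _, hwbc', hzbc', hIcc'⟩ := dk3_facts h'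
    apply key
    rw [hIcc, hIcc']
    have m1 : w' ∈ Set.Icc a b := hP.2.1 a b ⟨3, w, z, h⟩ w' hwbc'
    have m2 : z' ∈ Set.Icc a b := hP.2.1 a b ⟨3, w, z, h⟩ z' hzbc'
    have m3 : w ∈ Set.Icc a' b := hP.2.1 a' b ⟨3, w', z', h'⟩ w hwbc
    have m4 : z ∈ Set.Icc a' b := hP.2.1 a' b ⟨3, w', z', h'⟩ z hzbc
    have c1 := hcov w' m1 hwbc'
    have c2 := hcov z' m2 hzbc'
    have c3 := hcov' w m3 hwbc
    have c4 := hcov' z m4 hzbc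
    apply Set.eq_of_subset_of_subset
    · rintro x (rfl | rfl)
      · rcases c3 with rfl | rfl
        · exact Set.mem_insert _ _
        · exact Set.mem_insert_of_mem _ rfl
      · rcases c4 with rfl | rfl
        · exact Set.mem_insert _ _
        · exact Set.mem_insert_of_mem _ rfl
    · rintro x (rfl | rfl)
      · rcases c1 with rfl | rfl
        · exact Set.mem_insert _ _
        · exact Set.mem_insert_of_mem _ rfl
      · rcases c2 with rfl | rfl
        · exact Set.mem_insert _ _
        · exact Set.mem_insert_of_mem _ rfl
  · have e : k = 3 := by omega
    subst e
    obtain ⟨hcov, _, _, hwbc, hzbc, hIcc⟩ := dk3_facts h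
    obtain ⟨t2, n2, hat2, hnbc2, htw2, hsub2, hcov2, hIcc2⟩ := dk_sub h' hk4'
    have m3 : w ∈ Set.Icc a' b := hP.2.1 a' b ⟨k', w', z', h'⟩ w hwbc
    have m4 : z ∈ Set.Icc a' b := hP.2.1 a' b ⟨k', w', z', h'⟩ z hzbc
    have c3 := hcov2 w m3 hwbc
    have c4 := hcov2 z m4 hzbc
    exact absurd (le_of_eq (c3.trans c4.symm)) h.2.1.2.2.2.1
  · have e' : k' = 3 := by omega
    subst e'
    obtain ⟨hcov2, _, _, hwbc2, hzbc2, hIcc2⟩ := dk3_facts h'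
    obtain ⟨t, n, hat, hnbc, htw, hsub, hcov, hIcc⟩ := dk_sub h hk4
    have m1 : w' ∈ Set.Icc a b := hP.2.1 a b ⟨k, w, z, h⟩ w' hwbc2
    have m2 : z' ∈ Set.Icc a b := hP.2.1 a b ⟨k, w, z, h⟩ z' hzbc2
    have c1 := hcov w' m1 hwbc2
    have c2 := hcov z' m2 hzbc2
    exact absurd (le_of_eq (c1.trans c2.symm)) h'.2.1.2.2.2.1
  · obtain ⟨t, n, hat, hnbc, htw, hsub, hcov, hIcc⟩ := dk_sub h hk4
    obtain ⟨t2, n2, hat2, hnbc2, htw2, hsub2, hcov2, hIcc2⟩ := dk_sub h' hk4'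
    have hnn : n = n2 := hcov2 n (hP.2.1 a' b ⟨k', w', z', h'⟩ n hnbc) hnbc
    rw [← hnn] at hsub2
    have htt : t = t2 := IH (k-1) (by omega) (k'-1) t t2 n w z w' z' hsub hsub2
    apply key
    rw [← hIcc, ← hIcc2, htt, hnn]

private lemma dint_lt {x y : P} (h : IsDInterval x y) : x < y := by
  obtain ⟨k, w, z, hI⟩ := h
  exact (dk_facts hI).1.trans (dk_facts hI).2.2.1

private lemma rtg_le {x y : P} (h : Relation.ReflTransGen IsDInterval x y) : x ≤ y := by
  induction h with
  | refl => exact le_refl x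
  | tail h1 h2 ih => exact ih.trans (dint_lt h2).le

private lemma rtg_diag {x y : P} (h : Relation.ReflTransGen IsDInterval x y) : DiagRel x y := by
  induction h with
  | refl => exact Relation.EqvGen.refl x
  | tail h1 h2 ih => exact Relation.EqvGen.trans _ _ _ ih (Relation.EqvGen.rel _ _ h2)

private lemma back_det [Fintype P] (hP : IsDComplete P) {a y : P}
    (h : Relation.ReflTransGen IsDInterval a y) :
    ∀ a', Relation.ReflTransGen IsDInterval a' y →
      Relation.ReflTransGen IsDInterval a a' ∨ Relation.ReflTransGen IsDInterval a' a := by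
  induction h with
  | refl => intro a' h'; exact Or.inr h'
  | @tail b c h1 h2 ih =>
    intro a' h'
    rcases h'.cases_tail with rfl | ⟨e, he, h2'⟩
    · exact Or.inl (h1.tail h2)
    · obtain ⟨k, w, z, hI⟩ := h2
      obtain ⟨k', w', z', hI'⟩ := h2'
      have heb : e = b := bottom_unique hP k' k e b c w' z' w z hI' hI
      subst heb
      exact ih a' he

private lemma diag_joinable [Fintype P] (hP : IsDComplete P) {x y : P} (h : DiagRel x y) :
    ∃ m, Relation.ReflTransGen IsDInterval m x ∧ Relation.ReflTransGen IsDInterval m y := by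
  induction h with
  | rel a b hab => exact ⟨a, Relation.ReflTransGen.refl, Relation.ReflTransGen.single hab⟩
  | refl a => exact ⟨a, Relation.ReflTransGen.refl, Relation.ReflTransGen.refl⟩
  | symm a b _ ih => obtain ⟨m, h1, h2⟩ := ih; exact ⟨m, h2, h1⟩
  | trans a b c _ _ ih1 ih2 =>
    obtain ⟨m1, h1, h2⟩ := ih1
    obtain ⟨m2, h3, h4⟩ := ih2
    rcases back_det hP h2 m2 h3 with hm | hm
    · exact ⟨m1, h1, hm.trans h4⟩
    · exact ⟨m2, hm.trans h1, h4⟩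

private lemma exists_pred [Fintype P] (hP : IsDComplete P) {a0 a v : P}
    (ha : DiagRel a0 a) (hamin : ∀ x, DiagRel a0 x → a ≤ x)
    (hv : DiagRel a0 v) (hne : v ≠ a) :
    ∃ y, DiagRel a0 y ∧ IsDInterval y v := by
  have hav : DiagRel a v := Relation.EqvGen.trans _ _ _ (Relation.EqvGen.symm _ _ ha) hv
  obtain ⟨m, hma, hmv⟩ := diag_joinable hP hav
  have hm0 : DiagRel a0 m :=
    Relation.EqvGen.trans _ _ _ ha (Relation.EqvGen.symm _ _ (rtg_diag hma))
  have hmeq : m = a := le_antisymm (rtg_le hma) (hamin m hm0)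
  subst hmeq
  rcases hmv.cases_tail with rfl | ⟨y, hy, hyv⟩
  · exact absurd rfl hne
  · exact ⟨y, Relation.EqvGen.trans _ _ _ hm0 (rtg_diag hy), hyv⟩

private lemma cover_step [Fintype P] (hP : IsDComplete P) {y₁ v u : P}
    (hint : IsDInterval y₁ v) (huv : u ⋖ v) :
    ∃ w, y₁ ⋖ w ∧ w < v ∧ DiagRel u w := by
  obtain ⟨k, w, z, h⟩ := hint
  have humem : u ∈ Set.Icc y₁ v := hP.2.1 y₁ v ⟨k, w, z, h⟩ u huv
  have hk3 : 3 ≤ k := h.2.1.1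
  rcases Nat.lt_or_ge k 4 with hlt | hk4
  · have hk : k = 3 := by omega
    subst hk
    obtain ⟨hcov, hawc, hazc, _, _, _⟩ := dk3_facts h
    rcases hcov u humem huv with rfl | rfl
    · exact ⟨u, hawc, (dk_facts h).2.2.1, Relation.EqvGen.refl u⟩
    · exact ⟨u, hazc, (dk_facts h).2.2.2, Relation.EqvGen.refl u⟩
  · obtain ⟨t, n, hat, hnbc, htw, hsubI, hcov, hIcc⟩ := dk_sub h hk4
    have hun : u = n := hcov u humem huv
    refine ⟨t, hat, lt_of_le_of_lt htw (dk_facts h).2.2.1, ?_⟩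
    rw [hun]
    exact Relation.EqvGen.symm _ _ (Relation.EqvGen.rel _ _ ⟨k-1, w, z, hsubI⟩)

end DCompleteProofAux3

/-- If `C` and `D` are adjacent diagonals of a d-complete poset with minimal
elements `c` and `d`, then at most one of `c`, `d` is minimal in `P`. -/
theorem adjacent_diagonals_min {P : Type*} [PartialOrder P] [Fintype P]
    (hP : IsDComplete P) (c0 d0 : P)
    (hadj : ∃ c d : P, DiagRel c0 c ∧ DiagRel d0 d ∧ (c ⋖ d ∨ d ⋖ c))
    (c d : P) (hc : DiagRel c0 c) (hd : DiagRel d0 d)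
    (hcmin : ∀ x, DiagRel c0 x → c ≤ x) (hdmin : ∀ x, DiagRel d0 x → d ≤ x) :
    ¬ ((∀ y : P, ¬ y < c) ∧ (∀ y : P, ¬ y < d)) := by
  rintro ⟨hcP, hdP⟩
  obtain ⟨c', d', hc', hd', hcov⟩ := hadj
  have key : ∀ v : P, ∀ u, u ⋖ v →
      ((DiagRel c0 u ∧ DiagRel d0 v) ∨ (DiagRel d0 u ∧ DiagRel c0 v)) → False := by
    intro v
    induction v using WellFoundedLT.induction with
    | _ v IH =>
    intro u huv hcase
    rcases hcase with ⟨hu, hv⟩ | ⟨hu, hv⟩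
    · rcases eq_or_ne v d with rfl | hvd
      · exact hdP u huv.lt
      · obtain ⟨y₁, hy₁, hint⟩ := exists_pred hP hd hdmin hv hvd
        obtain ⟨v', hcv', hlt, hdr⟩ := cover_step hP hint huv
        exact IH v' hlt y₁ hcv' (Or.inr ⟨hy₁, Relation.EqvGen.trans _ _ _ hu hdr⟩)
    · rcases eq_or_ne v c with rfl | hvc
      · exact hcP u huv.lt
      · obtain ⟨y₁, hy₁, hint⟩ := exists_pred hP hc hcmin hv hvc
        obtain ⟨v', hcv', hlt, hdr⟩ := cover_step hP hint huv
        exact IH v' hlt y₁ hcv' (Or.inl ⟨hy₁, Relation.EqvGen.trans _ _ _ hu hdr⟩)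
  rcases hcov with hcd | hcd
  · exact key d' c' hcd (Or.inl ⟨hc', hd'⟩)
  · exact key c' d' hcd (Or.inr ⟨hd', hc'⟩)
end

section
/- The hook vector of a d-complete poset is well-defined: for every element p of a d-complete poset P there is a unique vector h_P(p) ∈ ℤ^{D(P)} (indexed by the diagonals of P) satisfying the recursion: if p is not a neck element of any d-interval, then the D-coordinate of h_P(p) is the number of elements of diagonal D weakly below p; and if [p', p] is a d-interval with side elements w, z, then h_P(p) = h_P(w) + h_P(z) − h_P(p'). -/
variable {P : Type*} [PartialOrder P]

namespace HookAux

variable {P : Type*} [PartialOrder P] [Fintype P]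

/-- In a finite chain `C` with at least `j ≥ 1` elements, there is `t ∈ C` whose
upper set within `C` has exactly `j` elements. -/
lemma chain_exists_upper (C : Set P) (hC : IsChain (· ≤ ·) C) :
    ∀ j, 1 ≤ j → j ≤ C.ncard → ∃ t ∈ C, {x ∈ C | t ≤ x}.ncard = j := by
  intro j h1 hj
  induction j, h1 using Nat.le_induction with
  | base =>
    have hne : C.Nonempty := by
      rw [← Set.ncard_pos C.toFinite]; omega
    obtain ⟨t, htC, ht⟩ := Set.Finite.exists_maximalFor id C C.toFinite hne
    refine ⟨t, htC, ?_⟩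
    have : {x ∈ C | t ≤ x} = {t} := by
      ext x
      simp only [Set.mem_setOf_eq, Set.mem_singleton_iff]
      constructor
      · rintro ⟨hxC, htx⟩; exact le_antisymm (ht hxC htx) htx
      · rintro rfl; exact ⟨htC, le_rfl⟩
    rw [this, Set.ncard_singleton]
  | succ j h1 ih =>
    obtain ⟨t, htC, hU⟩ := ih (by omega)
    have hex : ∃ y, y ∈ C ∧ ¬ t ≤ y := by
      by_contra hcon
      push_neg at hcon
      have : C ⊆ {x ∈ C | t ≤ x} := fun x hx => ⟨hx, hcon x hx⟩
      have := Set.ncard_le_ncard this {x ∈ C | t ≤ x}.toFinite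
      omega
    obtain ⟨y, hyC, hyt⟩ := hex
    obtain ⟨y₀, hy₀, hy₀max⟩ := Set.Finite.exists_maximalFor id {x ∈ C | ¬ t ≤ x}
      (Set.toFinite _) ⟨y, hyC, hyt⟩
    obtain ⟨hy₀C, hy₀t⟩ := hy₀
    have hy₀let : y₀ ≤ t := by
      rcases hC.total hy₀C htC with h | h
      · exact h
      · exact absurd h hy₀t
    have hkey : {x ∈ C | y₀ ≤ x} = insert y₀ {x ∈ C | t ≤ x} := by
      ext x
      simp only [Set.mem_setOf_eq, Set.mem_insert_iff]
      constructor
      · rintro ⟨hxC, hyx⟩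
        by_cases hxt : t ≤ x
        · exact Or.inr ⟨hxC, hxt⟩
        · exact Or.inl (le_antisymm (hy₀max ⟨hxC, hxt⟩ hyx) hyx)
      · rintro (rfl | ⟨hxC, htx⟩)
        · exact ⟨hy₀C, le_rfl⟩
        · exact ⟨hxC, hy₀let.trans htx⟩
    refine ⟨y₀, hy₀C, ?_⟩
    rw [hkey, Set.ncard_insert_of_notMem (by simp [hy₀t]) (Set.toFinite _), hU]

/-- Dual version: `t` with exactly `j` elements of `C` below it. -/
lemma chain_exists_lower (C : Set P) (hC : IsChain (· ≤ ·) C) :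
    ∀ j, 1 ≤ j → j ≤ C.ncard → ∃ t ∈ C, {x ∈ C | x ≤ t}.ncard = j := by
  intro j h1 hj
  induction j, h1 using Nat.le_induction with
  | base =>
    have hne : C.Nonempty := by
      rw [← Set.ncard_pos C.toFinite]; omega
    obtain ⟨t, htC, ht⟩ := Set.Finite.exists_minimalFor id C C.toFinite hne
    refine ⟨t, htC, ?_⟩
    have : {x ∈ C | x ≤ t} = {t} := by
      ext x
      simp only [Set.mem_setOf_eq, Set.mem_singleton_iff]
      constructor
      · rintro ⟨hxC, htx⟩; exact le_antisymm htx (ht hxC htx)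
      · rintro rfl; exact ⟨htC, le_rfl⟩
    rw [this, Set.ncard_singleton]
  | succ j h1 ih =>
    obtain ⟨t, htC, hU⟩ := ih (by omega)
    have hex : ∃ y, y ∈ C ∧ ¬ y ≤ t := by
      by_contra hcon
      push_neg at hcon
      have : C ⊆ {x ∈ C | x ≤ t} := fun x hx => ⟨hx, hcon x hx⟩
      have := Set.ncard_le_ncard this {x ∈ C | x ≤ t}.toFinite
      omega
    obtain ⟨y, hyC, hyt⟩ := hex
    obtain ⟨y₀, hy₀, hy₀min⟩ := Set.Finite.exists_minimalFor id {x ∈ C | ¬ x ≤ t}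
      (Set.toFinite _) ⟨y, hyC, hyt⟩
    obtain ⟨hy₀C, hy₀t⟩ := hy₀
    have hy₀let : t ≤ y₀ := by
      rcases hC.total htC hy₀C with h | h
      · exact h
      · exact absurd h hy₀t
    have hkey : {x ∈ C | x ≤ y₀} = insert y₀ {x ∈ C | x ≤ t} := by
      ext x
      simp only [Set.mem_setOf_eq, Set.mem_insert_iff]
      constructor
      · rintro ⟨hxC, hyx⟩
        by_cases hxt : x ≤ t
        · exact Or.inr ⟨hxC, hxt⟩
        · exact Or.inl (le_antisymm hyx (hy₀min ⟨hxC, hxt⟩ hyx))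
      · rintro (rfl | ⟨hxC, htx⟩)
        · exact ⟨hy₀C, le_rfl⟩
        · exact ⟨hxC, htx.trans hy₀let⟩
    refine ⟨y₀, hy₀C, ?_⟩
    rw [hkey, Set.ncard_insert_of_notMem (by simp [hy₀t]) (Set.toFinite _), hU]

end HookAux
section HookAux

variable {P : Type*} [PartialOrder P]

namespace HookAux

variable {k : ℕ} {a b w z : P}

lemma basic (h : IsDkIntervalWith k a b w z) :
    a < w ∧ a < z ∧ w < b ∧ z < b ∧ a < b ∧ w ≠ z := by
  obtain ⟨hab, ⟨hk3, hwS, hzS, hwz, hzw, htri, hchT, hchN, hT⟩, hN⟩ := h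
  have haw : a ≤ w := hwS.1
  have haz : a ≤ z := hzS.1
  have hwb : w ≤ b := hwS.2
  have hzb : z ≤ b := hzS.2
  refine ⟨lt_of_le_of_ne haw ?_, lt_of_le_of_ne haz ?_, lt_of_le_of_ne hwb ?_,
    lt_of_le_of_ne hzb ?_, ?_, ?_⟩
  · rintro rfl; exact hwz haz
  · rintro rfl; exact hzw haw
  · rintro rfl; exact hzw hzb
  · rintro rfl; exact hwz hwb
  · exact lt_of_le_of_lt haw (lt_of_le_of_ne hwb (by rintro rfl; exact hzw hzb))
  · rintro rfl; exact hwz le_rfl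

lemma a_mem_tail (h : IsDkIntervalWith k a b w z) :
    a ∈ {x ∈ Set.Icc a b | x ≤ w ∧ x ≤ z} :=
  ⟨⟨le_rfl, h.1⟩, h.2.1.2.1.1, h.2.1.2.2.1.1⟩

lemma b_mem_neck (h : IsDkIntervalWith k a b w z) :
    b ∈ {x ∈ Set.Icc a b | w ≤ x ∧ z ≤ x} :=
  ⟨⟨h.1, le_rfl⟩, h.2.1.2.1.2, h.2.1.2.2.1.2⟩

/-- Description of the interval of a sub-`d`-interval cut out by a tail element `t`
and a neck element `n` of the big interval. -/
lemma sub_icc (h : IsDkIntervalWith k a b w z) {t n : P}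
    (htI : t ∈ Set.Icc a b) (htw : t ≤ w) (htz : t ≤ z)
    (hnI : n ∈ Set.Icc a b) (hwn : w ≤ n) (hzn : z ≤ n) :
    Set.Icc t n =
      {x ∈ {x ∈ Set.Icc a b | x ≤ w ∧ x ≤ z} | t ≤ x} ∪ {w, z} ∪
      {x ∈ {x ∈ Set.Icc a b | w ≤ x ∧ z ≤ x} | x ≤ n} := by
  obtain ⟨hab, ⟨hk3, hwS, hzS, hwz, hzw, htri, hchT, hchN, hT⟩, hN⟩ := h
  ext x
  simp only [Set.mem_union, Set.mem_setOf_eq, Set.mem_insert_iff, Set.mem_singleton_iff,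
    Set.mem_Icc]
  constructor
  · rintro ⟨htx, hxn⟩
    have hxI : x ∈ Set.Icc a b := ⟨htI.1.trans htx, hxn.trans hnI.2⟩
    rcases htri x hxI with rfl | rfl | ⟨h1, h2⟩ | ⟨h1, h2⟩
    · exact Or.inl (Or.inr (Or.inl rfl))
    · exact Or.inl (Or.inr (Or.inr rfl))
    · exact Or.inl (Or.inl ⟨⟨hxI, h1, h2⟩, htx⟩)
    · exact Or.inr ⟨⟨hxI, h1, h2⟩, hxn⟩
  · rintro ((⟨⟨hxI, h1, h2⟩, htx⟩ | rfl | rfl) | ⟨⟨hxI, h1, h2⟩, hxn⟩)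
    · exact ⟨htx, h1.trans hwn⟩
    · exact ⟨htw, hwn⟩
    · exact ⟨htz, hzn⟩
    · exact ⟨htw.trans h1, hxn⟩

/-- The sub-`d`-interval cut out by a tail element `t` and a neck element `n`
at matching depth `j`. -/
lemma sub_interval (h : IsDkIntervalWith k a b w z) {t n : P}
    (htI : t ∈ Set.Icc a b) (htw : t ≤ w) (htz : t ≤ z)
    (hnI : n ∈ Set.Icc a b) (hwn : w ≤ n) (hzn : z ≤ n) {j : ℕ} (hj : 1 ≤ j)
    (hT' : {x ∈ {x ∈ Set.Icc a b | x ≤ w ∧ x ≤ z} | t ≤ x}.ncard = j)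
    (hN' : {x ∈ {x ∈ Set.Icc a b | w ≤ x ∧ z ≤ x} | x ≤ n}.ncard = j) :
    IsDkIntervalWith (j + 2) t n w z := by
  have hicc := sub_icc h htI htw htz hnI hwn hzn
  obtain ⟨hab, ⟨hk3, hwS, hzS, hwz, hzw, htri, hchT, hchN, hT⟩, hN⟩ := h
  have hsub : Set.Icc t n ⊆ Set.Icc a b := fun x hx =>
    ⟨htI.1.trans hx.1, hx.2.trans hnI.2⟩
  have htn : t ≤ n := htw.trans hwn
  -- the tail set of the small interval
  have htail : {x ∈ Set.Icc t n | x ≤ w ∧ x ≤ z} =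
      {x ∈ {x ∈ Set.Icc a b | x ≤ w ∧ x ≤ z} | t ≤ x} := by
    ext x
    simp only [Set.mem_setOf_eq]
    constructor
    · rintro ⟨hxtn, h1, h2⟩
      exact ⟨⟨hsub hxtn, h1, h2⟩, hxtn.1⟩
    · rintro ⟨⟨hxI, h1, h2⟩, htx⟩
      exact ⟨⟨htx, h1.trans hwn⟩, h1, h2⟩
  have hneck : {x ∈ Set.Icc t n | w ≤ x ∧ z ≤ x} =
      {x ∈ {x ∈ Set.Icc a b | w ≤ x ∧ z ≤ x} | x ≤ n} := by
    ext x
    simp only [Set.mem_setOf_eq]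
    constructor
    · rintro ⟨hxtn, h1, h2⟩
      exact ⟨⟨hsub hxtn, h1, h2⟩, hxtn.2⟩
    · rintro ⟨⟨hxI, h1, h2⟩, hxn⟩
      exact ⟨⟨htw.trans h1, hxn⟩, h1, h2⟩
  refine ⟨htn, ⟨by omega, ⟨htw, hwn⟩, ⟨htz, hzn⟩, hwz, hzw, ?_, ?_, ?_, ?_⟩, ?_⟩
  · exact fun x hx => htri x (hsub hx)
  · exact hchT.mono (by rw [htail]; exact fun x hx => hx.1)
  · exact hchN.mono (by rw [hneck]; exact fun x hx => hx.1)
  · rw [htail, hT']; omega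
  · rw [hneck, hN']; omega

end HookAux

end HookAux
namespace HookAux

variable {P : Type*} [PartialOrder P] {k : ℕ} {a b w z : P}

/-- Every neck element of a `d`-interval is the maximum of a `d`-interval. -/
lemma neck_is_max [Fintype P] (h : IsDkIntervalWith k a b w z) {p : P}
    (hpI : p ∈ Set.Icc a b) (hwp : w ≤ p) (hzp : z ≤ p) :
    ∃ k' t, IsDkIntervalWith k' t p w z := by
  classical
  have hchT := h.2.1.2.2.2.2.2.2.1
  have hT := h.2.1.2.2.2.2.2.2.2.2
  have hN := h.2.2
  set N := {x ∈ Set.Icc a b | w ≤ x ∧ z ≤ x} with hNdef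
  set T := {x ∈ Set.Icc a b | x ≤ w ∧ x ≤ z} with hTdef
  set j := {x ∈ N | x ≤ p}.ncard with hjdef
  have hpN : p ∈ N := ⟨hpI, hwp, hzp⟩
  have hj1 : 1 ≤ j := by
    rw [hjdef]
    have : ({x ∈ N | x ≤ p}).Nonempty := ⟨p, hpN, le_rfl⟩
    have := (Set.ncard_pos (Set.toFinite _)).2 this
    omega
  have hjle : j ≤ T.ncard := by
    have h1 : {x ∈ N | x ≤ p} ⊆ N := fun x hx => hx.1
    have := Set.ncard_le_ncard h1 (Set.toFinite _)
    omega
  obtain ⟨t, htT, ht⟩ := chain_exists_upper T hchT j hj1 hjle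
  exact ⟨j + 2, t, sub_interval h htT.1 htT.2.1 htT.2.2 hpI hwp hzp hj1 ht rfl⟩

/-- `Icc a b` minus its maximum is a `d_k⁻`-convex set with minimum `a`. -/
lemma dkminus [Fintype P] (h : IsDkIntervalWith k a b w z) :
    IsDkMinusConvex k (Set.Icc a b \ {b}) ∧ a ∈ Set.Icc a b \ {b} ∧
      (∀ x ∈ Set.Icc a b \ {b}, a ≤ x) := by
  obtain ⟨haw, haz, hwb, hzb, hab, hwz'⟩ := basic h
  obtain ⟨hab', ⟨hk3, hwS, hzS, hwz, hzw, htri, hchT, hchN, hT⟩, hN⟩ := h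
  have htail : {x ∈ Set.Icc a b \ {b} | x ≤ w ∧ x ≤ z} =
      {x ∈ Set.Icc a b | x ≤ w ∧ x ≤ z} := by
    ext x
    simp only [Set.mem_setOf_eq, Set.mem_diff, Set.mem_singleton_iff]
    constructor
    · rintro ⟨⟨h1, _⟩, h2⟩; exact ⟨h1, h2⟩
    · rintro ⟨h1, h2⟩
      refine ⟨⟨h1, ?_⟩, h2⟩
      rintro rfl
      exact absurd h2.1 (not_le_of_gt hwb)
  have hneck : {x ∈ Set.Icc a b \ {b} | w ≤ x ∧ z ≤ x} =
      {x ∈ Set.Icc a b | w ≤ x ∧ z ≤ x} \ {b} := by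
    ext x
    simp only [Set.mem_setOf_eq, Set.mem_diff, Set.mem_singleton_iff]
    tauto
  refine ⟨⟨?_, w, z, ⟨hk3, ⟨hwS, by rintro rfl; exact lt_irrefl _ hwb⟩,
    ⟨hzS, by rintro rfl; exact lt_irrefl _ hzb⟩, hwz, hzw,
    fun x hx => htri x hx.1, ?_, ?_, ?_⟩, ?_⟩, ⟨⟨le_rfl, hab'⟩, hab.ne⟩,
    fun x hx => hx.1.1⟩
  · -- convexity
    rintro s ⟨hsI, hsb⟩ s' ⟨hs'I, hs'b⟩ x hsx hxs'
    refine ⟨⟨hsI.1.trans hsx, hxs'.trans hs'I.2⟩, ?_⟩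
    rintro rfl
    exact hs'b (le_antisymm hs'I.2 hxs')
  · exact hchT.mono (by rw [htail])
  · exact hchN.mono (by rw [hneck]; exact Set.diff_subset)
  · rw [htail, hT]
  · rw [hneck, Set.ncard_diff_singleton_of_mem
      (show b ∈ {x ∈ Set.Icc a b | w ≤ x ∧ z ≤ x} from ⟨⟨hab', le_rfl⟩, hwb.le, hzb.le⟩), hN]
    omega

lemma k3_icc [Fintype P] (h : IsDkIntervalWith 3 a b w z) : Set.Icc a b = {a, w, z, b} := by
  obtain ⟨haw, haz, hwb, hzb, hab, hwz'⟩ := basic h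
  obtain ⟨hab', ⟨hk3, hwS, hzS, hwz, hzw, htri, hchT, hchN, hT⟩, hN⟩ := h
  have htl : ({a} : Set P) = {x ∈ Set.Icc a b | x ≤ w ∧ x ≤ z} := by
    apply Set.eq_of_subset_of_ncard_le
    · rintro x rfl
      exact ⟨⟨le_rfl, hab'⟩, haw.le, haz.le⟩
    · rw [hT, Set.ncard_singleton]
    · exact Set.toFinite _
  have hnk : ({b} : Set P) = {x ∈ Set.Icc a b | w ≤ x ∧ z ≤ x} := by
    apply Set.eq_of_subset_of_ncard_le
    · rintro x rfl
      exact ⟨⟨hab', le_rfl⟩, hwb.le, hzb.le⟩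
    · rw [hN, Set.ncard_singleton]
    · exact Set.toFinite _
  ext x
  simp only [Set.mem_insert_iff, Set.mem_singleton_iff]
  constructor
  · intro hx
    rcases htri x hx with rfl | rfl | hx' | hx'
    · exact Or.inr (Or.inl rfl)
    · exact Or.inr (Or.inr (Or.inl rfl))
    · have : x ∈ ({a} : Set P) := by rw [htl]; exact ⟨hx, hx'⟩
      exact Or.inl this
    · have : x ∈ ({b} : Set P) := by rw [hnk]; exact ⟨hx, hx'⟩
      exact Or.inr (Or.inr (Or.inr this))
  · rintro (rfl | rfl | rfl | rfl)
    · exact ⟨le_rfl, hab'⟩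
    · exact hwS
    · exact hzS
    · exact ⟨hab', le_rfl⟩

lemma k3_covers [Fintype P] (h : IsDkIntervalWith 3 a b w z) : w ⋖ b ∧ z ⋖ b := by
  obtain ⟨haw, haz, hwb, hzb, hab, hwz'⟩ := basic h
  have hicc := k3_icc h
  have hwzle := h.2.1.2.2.2.1
  have hzwle := h.2.1.2.2.2.2.1
  constructor
  · refine ⟨hwb, fun c hwc hcb => ?_⟩
    have hc : c ∈ Set.Icc a b := ⟨haw.le.trans hwc.le, hcb.le⟩
    rw [hicc] at hc
    rcases hc with rfl | rfl | rfl | rfl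
    · exact absurd (haw.trans hwc) (lt_irrefl _)
    · exact lt_irrefl _ hwc
    · exact hwzle hwc.le
    · exact lt_irrefl _ hcb
  · refine ⟨hzb, fun c hwc hcb => ?_⟩
    have hc : c ∈ Set.Icc a b := ⟨haz.le.trans hwc.le, hcb.le⟩
    rw [hicc] at hc
    rcases hc with rfl | rfl | rfl | rfl
    · exact absurd (haz.trans hwc) (lt_irrefl _)
    · exact hzwle hwc.le
    · exact lt_irrefl _ hwc
    · exact lt_irrefl _ hcb

end HookAux
namespace HookAux

variable {P : Type*} [PartialOrder P] {k : ℕ} {a b w z : P}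

lemma k4_cover [Fintype P] (hP : IsDComplete P) (h : IsDkIntervalWith k a b w z)
    (hk : 4 ≤ k) :
    ∃ t n, IsDkIntervalWith (k - 1) t n w z ∧ n ⋖ b ∧ (∀ x, x ⋖ b → x = n) ∧
      Set.Icc t n = Set.Icc a b \ {a, b} := by
  classical
  obtain ⟨haw, haz, hwb, hzb, hab, hwz'⟩ := basic h
  have hamem := a_mem_tail h
  have hbmem := b_mem_neck h
  have hchT := h.2.1.2.2.2.2.2.2.1
  have hchN := h.2.1.2.2.2.2.2.2.2.1
  have hT := h.2.1.2.2.2.2.2.2.2.2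
  have hN := h.2.2
  have htri := h.2.1.2.2.2.2.2.1
  have hwz := h.2.1.2.2.2.1
  have hzw := h.2.1.2.2.2.2.1
  set T := {x ∈ Set.Icc a b | x ≤ w ∧ x ≤ z} with hTdef
  set N := {x ∈ Set.Icc a b | w ≤ x ∧ z ≤ x} with hNdef
  obtain ⟨n, hnN, hn⟩ := chain_exists_lower N hchN (k - 3) (by omega) (by omega)
  obtain ⟨t, htT, ht⟩ := chain_exists_upper T hchT (k - 3) (by omega) (by omega)
  have hbn : ¬ b ≤ n := by
    intro hbn
    have hsub : N ⊆ {x ∈ N | x ≤ n} := fun x hx => ⟨hx, hx.1.2.trans hbn⟩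
    have := Set.ncard_le_ncard hsub (Set.toFinite _)
    omega
  have hnb : n < b := lt_of_le_of_ne hnN.1.2 (fun hh => hbn (hh ▸ le_rfl))
  have hN' : {x ∈ N | x ≤ n} = N \ {b} := by
    apply Set.eq_of_subset_of_ncard_le
    · rintro x ⟨hxN, hxn⟩
      refine ⟨hxN, ?_⟩
      rintro rfl
      exact hbn hxn
    · rw [Set.ncard_diff_singleton_of_mem hbmem, hN, hn]
      omega
    · exact Set.toFinite _
  have hta : ¬ t ≤ a := by
    intro hta
    have hsub : T ⊆ {x ∈ T | t ≤ x} := fun x hx => ⟨hx, hta.trans hx.1.1⟩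
    have := Set.ncard_le_ncard hsub (Set.toFinite _)
    omega
  have hT' : {x ∈ T | t ≤ x} = T \ {a} := by
    apply Set.eq_of_subset_of_ncard_le
    · rintro x ⟨hxT, htx⟩
      refine ⟨hxT, ?_⟩
      rintro rfl
      exact hta htx
    · rw [Set.ncard_diff_singleton_of_mem hamem, hT, ht]
      omega
    · exact Set.toFinite _
  have hwn : w < n := lt_of_le_of_ne hnN.2.1 (by rintro rfl; exact hzw hnN.2.2)
  have hzn : z < n := lt_of_le_of_ne hnN.2.2 (by rintro rfl; exact hwz hnN.2.1)
  have hcov : n ⋖ b := by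
    refine ⟨hnb, fun c hnc hcb => ?_⟩
    have hcI : c ∈ Set.Icc a b := ⟨hnN.1.1.trans hnc.le, hcb.le⟩
    rcases htri c hcI with rfl | rfl | hc | hc
    · exact absurd hnc hnN.2.1.not_gt
    · exact absurd hnc hnN.2.2.not_gt
    · exact absurd hnc (hc.1.trans_lt hwn).asymm
    · have hcN : c ∈ N := ⟨hcI, hc⟩
      by_cases hcb' : c = b
      · exact absurd hcb (hcb' ▸ lt_irrefl _)
      · have : c ∈ {x ∈ N | x ≤ n} := by rw [hN']; exact ⟨hcN, hcb'⟩
        exact absurd this.2 hnc.not_ge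
  have huniq : ∀ x, x ⋖ b → x = n := by
    intro x hx
    have hxI : x ∈ Set.Icc a b := hP.2.1 a b ⟨k, w, z, h⟩ x hx
    rcases htri x hxI with rfl | rfl | hc | hc
    · exact absurd hnb (hx.2 hwn)
    · exact absurd hnb (hx.2 hzn)
    · exact absurd hnb (hx.2 (hc.1.trans_lt hwn))
    · have hxN : x ∈ N := ⟨hxI, hc⟩
      by_cases hxb : x = b
      · exact absurd hx.1 (hxb ▸ lt_irrefl _)
      · have hxn : x ≤ n := by
          have : x ∈ {x ∈ N | x ≤ n} := by rw [hN']; exact ⟨hxN, hxb⟩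
          exact this.2
        rcases lt_or_eq_of_le hxn with h' | h'
        · exact absurd hnb (hx.2 h')
        · exact h'
  have hsubI := sub_interval h htT.1 htT.2.1 htT.2.2 hnN.1 hnN.2.1 hnN.2.2
    (j := k - 3) (by omega) ht hn
  have hkk : k - 3 + 2 = k - 1 := by omega
  rw [hkk] at hsubI
  refine ⟨t, n, hsubI, hcov, huniq, ?_⟩
  rw [sub_icc h htT.1 htT.2.1 htT.2.2 hnN.1 hnN.2.1 hnN.2.2, hT', hN']
  ext x
  simp only [Set.mem_union, Set.mem_diff, Set.mem_insert_iff, Set.mem_singleton_iff, not_or]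
  constructor
  · rintro ((⟨hxT, hxa⟩ | rfl | rfl) | ⟨hxN, hxb⟩)
    · refine ⟨hxT.1, ?_, ?_⟩
      · exact hxa
      · rintro rfl
        exact absurd hxT.2.1 hwb.not_ge
    · exact ⟨⟨haw.le, hwb.le⟩, haw.ne', hwb.ne⟩
    · exact ⟨⟨haz.le, hzb.le⟩, haz.ne', hzb.ne⟩
    · refine ⟨hxN.1, ?_, hxb⟩
      rintro rfl
      exact absurd hxN.2.1 haw.not_ge
  · rintro ⟨hxI, hxa, hxb⟩
    rcases htri x hxI with rfl | rfl | hc | hc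
    · exact Or.inl (Or.inr (Or.inl rfl))
    · exact Or.inl (Or.inr (Or.inr rfl))
    · exact Or.inl (Or.inl ⟨⟨hxI, hc⟩, hxa⟩)
    · exact Or.inr ⟨⟨hxI, hc⟩, hxb⟩

end HookAux
namespace HookAux

variable {P : Type*} [PartialOrder P] {k : ℕ} {a b w z : P}

/-- `DkStruct` is symmetric in the two side elements. -/
lemma swap (h : IsDkIntervalWith k a b w z) : IsDkIntervalWith k a b z w := by
  obtain ⟨hab, ⟨hk3, hwS, hzS, hwz, hzw, htri, hchT, hchN, hT⟩, hN⟩ := h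
  have e1 : {x ∈ Set.Icc a b | x ≤ z ∧ x ≤ w} = {x ∈ Set.Icc a b | x ≤ w ∧ x ≤ z} := by
    ext x; simp only [Set.mem_setOf_eq]; tauto
  have e2 : {x ∈ Set.Icc a b | z ≤ x ∧ w ≤ x} = {x ∈ Set.Icc a b | w ≤ x ∧ z ≤ x} := by
    ext x; simp only [Set.mem_setOf_eq]; tauto
  refine ⟨hab, ⟨hk3, hzS, hwS, hzw, hwz, fun x hx => ?_, ?_, ?_, ?_⟩, ?_⟩
  · rcases htri x hx with h' | h' | h' | h' <;> tauto
  · rw [e1]; exact hchT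
  · rw [e2]; exact hchN
  · rw [e1]; exact hT
  · rw [e2]; exact hN

lemma diff2 : (Set.Icc a b \ {b}) \ {a} = Set.Icc a b \ ({a, b} : Set P) := by
  ext x
  simp only [Set.mem_diff, Set.mem_singleton_iff, Set.mem_insert_iff, not_or]
  tauto

lemma k3_diff [Fintype P] (h : IsDkIntervalWith 3 a b w z) :
    Set.Icc a b \ ({a, b} : Set P) = {w, z} := by
  obtain ⟨haw, haz, hwb, hzb, hab, hwz'⟩ := basic h
  rw [k3_icc h]
  ext x
  simp only [Set.mem_diff, Set.mem_insert_iff, Set.mem_singleton_iff, not_or]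
  constructor
  · rintro ⟨rfl | rfl | rfl | rfl, hxa, hxb⟩
    · exact absurd rfl hxa
    · exact Or.inl rfl
    · exact Or.inr rfl
    · exact absurd rfl hxb
  · rintro (rfl | rfl)
    · exact ⟨Or.inr (Or.inl rfl), haw.ne', hwb.ne⟩
    · exact ⟨Or.inr (Or.inr (Or.inl rfl)), haz.ne', hzb.ne⟩

/-- In the `d_3` case, each side element of one interval is a side element of the other. -/
lemma k3_side [Fintype P] (hP : IsDComplete P) {a' w' z' : P}
    (h1 : IsDkIntervalWith 3 a b w z) (h2 : IsDkIntervalWith 3 a' b w' z') :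
    w = w' ∨ w = z' := by
  obtain ⟨haw, haz, hwb, hzb, hab, hwz'⟩ := basic h1
  obtain ⟨haw2, haz2, hwb2, hzb2, hab2, hwz2'⟩ := basic h2
  have hwz := h1.2.1.2.2.2.1
  have hmem : w ∈ Set.Icc a' b := hP.2.1 a' b ⟨3, w', z', h2⟩ w (k3_covers h1).1
  rw [k3_icc h2] at hmem
  rcases hmem with heq | heq | heq | heq
  · exfalso
    have hmem' : w' ∈ Set.Icc a b := hP.2.1 a b ⟨3, w, z, h1⟩ w' (k3_covers h2).1
    rw [k3_icc h1] at hmem'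
    have hww' : w < w' := heq ▸ haw2
    rcases hmem' with heq' | heq' | heq' | heq'
    · exact absurd (heq' ▸ hww') haw.asymm
    · exact absurd (heq' ▸ hww') (lt_irrefl _)
    · exact hwz (heq' ▸ hww').le
    · exact absurd (heq' ▸ hwb2) (lt_irrefl _)
  · exact Or.inl heq
  · exact Or.inr heq
  · exact absurd (heq ▸ hwb) (lt_irrefl _)

/-- Uniqueness of the `d`-interval with a given maximal element. -/
lemma max_unique [Fintype P] (hP : IsDComplete P) (b : P) :
    ∀ (a w z a' w' z' : P), IsDIntervalWith a b w z → IsDIntervalWith a' b w' z' →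
      a = a' ∧ ((w = w' ∧ z = z') ∨ (w = z' ∧ z = w')) := by
  refine wellFounded_lt.induction
    (C := fun b => ∀ (a w z a' w' z' : P), IsDIntervalWith a b w z →
      IsDIntervalWith a' b w' z' →
      a = a' ∧ ((w = w' ∧ z = z') ∨ (w = z' ∧ z = w'))) b ?_
  clear b
  intro b IH a w z a' w' z' hI1 hI2
  obtain ⟨k, h1⟩ := hI1
  obtain ⟨k', h2⟩ := hI2
  have hk3 : 3 ≤ k := h1.2.1.1
  have hk3' : 3 ≤ k' := h2.2.1.1
  -- first derive that the side pairs agree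
  have hsides : (w = w' ∧ z = z') ∨ (w = z' ∧ z = w') := by
    rcases Nat.lt_or_ge k 4 with hk | hk4
    · have hk0 : k = 3 := by omega
      subst hk0
      rcases Nat.lt_or_ge k' 4 with hk' | hk4'
      · have hk0' : k' = 3 := by omega
        subst hk0'
        have hw := k3_side hP h1 h2
        have hz := k3_side hP (swap h1) h2
        have hwz' := (basic h1).2.2.2.2.2
        have hwz2' := (basic h2).2.2.2.2.2
        rcases hw with rfl | rfl
        · rcases hz with rfl | hz2
          · exact absurd rfl hwz'
          · exact Or.inl ⟨rfl, hz2⟩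
        · rcases hz with hz2 | rfl
          · exact Or.inr ⟨rfl, hz2⟩
          · exact absurd rfl hwz'
      · exfalso
        obtain ⟨t, n, hsub, hncov, huniq, hicc⟩ := k4_cover hP h2 hk4'
        have hw := huniq w (k3_covers h1).1
        have hz := huniq z (k3_covers h1).2
        exact (basic h1).2.2.2.2.2 (hw.trans hz.symm)
    · rcases Nat.lt_or_ge k' 4 with hk' | hk4'
      · exfalso
        have hk0' : k' = 3 := by omega
        subst hk0'
        obtain ⟨t, n, hsub, hncov, huniq, hicc⟩ := k4_cover hP h1 hk4
        have hw := huniq w' (k3_covers h2).1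
        have hz := huniq z' (k3_covers h2).2
        exact (basic h2).2.2.2.2.2 (hw.trans hz.symm)
      · obtain ⟨t, n, hsub, hncov, huniq, hicc⟩ := k4_cover hP h1 hk4
        obtain ⟨t', n', hsub', hncov', huniq', hicc'⟩ := k4_cover hP h2 hk4'
        have hnn : n' = n := huniq n' hncov'
        subst hnn
        exact (IH n' hncov.1 t w z t' w' z' ⟨k - 1, hsub⟩ ⟨k' - 1, hsub'⟩).2
  -- now the minimum
  have hdiff : Set.Icc a b \ ({a, b} : Set P) = Set.Icc a' b \ ({a', b} : Set P) := by
    rcases Nat.lt_or_ge k 4 with hk | hk4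
    · have hk0 : k = 3 := by omega
      subst hk0
      rcases Nat.lt_or_ge k' 4 with hk' | hk4'
      · have hk0' : k' = 3 := by omega
        subst hk0'
        rw [k3_diff h1, k3_diff h2]
        rcases hsides with ⟨rfl, rfl⟩ | ⟨rfl, rfl⟩
        · rfl
        · exact Set.pair_comm _ _
      · exfalso
        obtain ⟨t, n, hsub, hncov, huniq, hicc⟩ := k4_cover hP h2 hk4'
        have hw := huniq w (k3_covers h1).1
        have hz := huniq z (k3_covers h1).2
        exact (basic h1).2.2.2.2.2 (hw.trans hz.symm)
    · rcases Nat.lt_or_ge k' 4 with hk' | hk4'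
      · exfalso
        have hk0' : k' = 3 := by omega
        subst hk0'
        obtain ⟨t, n, hsub, hncov, huniq, hicc⟩ := k4_cover hP h1 hk4
        have hw := huniq w' (k3_covers h2).1
        have hz := huniq z' (k3_covers h2).2
        exact (basic h2).2.2.2.2.2 (hw.trans hz.symm)
      · obtain ⟨t, n, hsub, hncov, huniq, hicc⟩ := k4_cover hP h1 hk4
        obtain ⟨t', n', hsub', hncov', huniq', hicc'⟩ := k4_cover hP h2 hk4'
        have hnn : n' = n := huniq n' hncov'
        subst hnn
        have hIH := IH n' hncov.1 t w z t' w' z' ⟨k - 1, hsub⟩ ⟨k' - 1, hsub'⟩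
        rw [← hicc, ← hicc', hIH.1]
  obtain ⟨hS, haS, haMin⟩ := dkminus h1
  obtain ⟨hT, ha'T, ha'Min⟩ := dkminus h2
  have hST : Set.Icc a b \ {b} = Set.Icc a' b \ {b} := by
    refine hP.2.2 k k' _ _ hS hT a haS a' ha'T haMin ha'Min ?_
    rw [diff2, diff2, hdiff]
  have haa : a = a' := by
    have h1' : a ∈ Set.Icc a' b \ {b} := hST ▸ haS
    have h2' : a' ∈ Set.Icc a b \ {b} := hST ▸ ha'T
    exact le_antisymm (haMin a' h2') (ha'Min a h1')
  exact ⟨haa, hsides⟩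

end HookAux
namespace HookAux

variable {P : Type*} [PartialOrder P]

lemma interval_lt {a b w z : P} (h : IsDIntervalWith a b w z) :
    a < b ∧ w < b ∧ z < b := by
  obtain ⟨k, h⟩ := h
  obtain ⟨haw, haz, hwb, hzb, hab, _⟩ := basic h
  exact ⟨hab, hwb, hzb⟩

open Classical in
/-- One step of the hook-vector recursion. -/
noncomputable def hookStep (P : Type*) [PartialOrder P] (p : P)
    (ih : ∀ q : P, q < p → Quotient (diagSetoid P) → ℤ) :
    Quotient (diagSetoid P) → ℤ :=
  if hM : ∃ x : P × P × P, IsDIntervalWith x.1 p x.2.1 x.2.2 ∧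
      x.1 < p ∧ x.2.1 < p ∧ x.2.2 < p then
    fun D => ih (Classical.choose hM).2.1 (Classical.choose_spec hM).2.2.1 D +
      ih (Classical.choose hM).2.2 (Classical.choose_spec hM).2.2.2 D -
      ih (Classical.choose hM).1 (Classical.choose_spec hM).2.1 D
  else fun D => (({r : P | Quotient.mk (diagSetoid P) r = D ∧ r ≤ p}).ncard : ℤ)

/-- The hook-vector function, by well-founded recursion. -/
noncomputable def hookF (P : Type*) [PartialOrder P] [Fintype P] :
    P → Quotient (diagSetoid P) → ℤ :=
  WellFounded.fix wellFounded_lt (hookStep P)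

lemma hookF_eq [Fintype P] (p : P) :
    hookF P p = hookStep P p (fun q _ => hookF P q) :=
  WellFounded.fix_eq _ _ _

lemma hookF_not_neck [Fintype P] (p : P) (hp : ¬ ∃ a b : P, IsNeckOf p a b) :
    ∀ D, hookF P p D =
      (({r : P | Quotient.mk (diagSetoid P) r = D ∧ r ≤ p}).ncard : ℤ) := by
  have hM : ¬ ∃ x : P × P × P, IsDIntervalWith x.1 p x.2.1 x.2.2 ∧
      x.1 < p ∧ x.2.1 < p ∧ x.2.2 < p := by
    rintro ⟨⟨a, w, z⟩, ⟨k, hI⟩, -, -, -⟩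
    exact hp ⟨a, p, k, w, z, hI, ⟨hI.1, le_rfl⟩, hI.2.1.2.1.2, hI.2.1.2.2.1.2⟩
  intro D
  rw [hookF_eq]
  simp only [hookStep, dif_neg hM]

lemma hookF_interval [Fintype P] (hP : IsDComplete P) {a p w z : P}
    (h : IsDIntervalWith a p w z) :
    ∀ D, hookF P p D = hookF P w D + hookF P z D - hookF P a D := by
  intro D
  have hlt := interval_lt h
  have hM : ∃ x : P × P × P, IsDIntervalWith x.1 p x.2.1 x.2.2 ∧
      x.1 < p ∧ x.2.1 < p ∧ x.2.2 < p :=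
    ⟨(a, w, z), h, hlt.1, hlt.2.1, hlt.2.2⟩
  rw [hookF_eq]
  simp only [hookStep, dif_pos hM]
  have spec := Classical.choose_spec hM
  obtain ⟨h1, h2⟩ := max_unique hP p (Classical.choose hM).1
    (Classical.choose hM).2.1 (Classical.choose hM).2.2 a w z spec.1 h
  rw [h1]
  rcases h2 with ⟨e1, e2⟩ | ⟨e1, e2⟩ <;> rw [e1, e2] <;> ring

lemma hookF_isHookVector [Fintype P] (hP : IsDComplete P) :
    IsHookVector (hookF P) :=
  ⟨fun p hp D => hookF_not_neck p hp D,
   fun p' p w z h D => hookF_interval hP h D⟩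

lemma hook_unique [Fintype P] (hP : IsDComplete P)
    (g1 g2 : P → Quotient (diagSetoid P) → ℤ)
    (hg1 : IsHookVector g1) (hg2 : IsHookVector g2) : g1 = g2 := by
  funext p
  refine wellFounded_lt.induction (C := fun p => g1 p = g2 p) p ?_
  clear p
  intro p IH
  by_cases hM : ∃ a w z : P, IsDIntervalWith a p w z
  · obtain ⟨a, w, z, hI⟩ := hM
    have hlt := interval_lt hI
    funext D
    rw [hg1.2 a p w z hI D, hg2.2 a p w z hI D, IH w hlt.2.1, IH z hlt.2.2,
      IH a hlt.1]
  · have hnk : ¬ ∃ a b : P, IsNeckOf p a b := by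
      rintro ⟨a, b, k, w, z, hI, hpI, hwp, hzp⟩
      obtain ⟨k', t, hI'⟩ := neck_is_max hI hpI hwp hzp
      exact hM ⟨t, w, z, k', hI'⟩
    funext D
    rw [hg1.1 p hnk D, hg2.1 p hnk D]

end HookAux
/-- Hook vectors of a d-complete poset are well-defined: there is a unique
function assigning to each element its hook vector, indexed by diagonals,
satisfying the defining recursion. -/
theorem hookVector_unique {P : Type*} [PartialOrder P] [Fintype P]
    (hP : IsDComplete P) :
    ∃! h : P → Quotient (diagSetoid P) → ℤ, IsHookVector h :=
  ⟨HookAux.hookF P, HookAux.hookF_isHookVector hP,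
    fun g hg => HookAux.hook_unique hP g (HookAux.hookF P) hg
      (HookAux.hookF_isHookVector hP)⟩
end

section
/- For a d-complete poset P with n elements and positive reals x_D for each diagonal D, the polytope of all vectors [s_p]_{p∈P} with s_p ≥ 0, s_p ≥ s_q whenever p ≤ q in P, and Σ_p x_{D(p)} s_p ≤ 1, has volume (1/n!) Σ_T weight(T), where the sum is over linear extensions T: p₁ > ⋯ > pₙ of P and weight(T)⁻¹ = Π_{i=1}^{n} Σ_{j=i}^{n} x_{D(p_j)}. -/
variable {P : Type*} [PartialOrder P]

open scoped Classical

namespace RPPAux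

open Finset MeasureTheory
open scoped ENNReal

variable {n : ℕ}

/-- The lower-triangular map `u ↦ (∑_{k ≤ i} c k * u k)_i`. -/
noncomputable def lmap (c : Fin n → ℝ) : (Fin n → ℝ) →ₗ[ℝ] (Fin n → ℝ) :=
  Matrix.toLin' (Matrix.of fun i k => if k ≤ i then c k else 0)

lemma lmap_apply (c u : Fin n → ℝ) (i : Fin n) :
    lmap c u i = ∑ k ∈ Finset.univ.filter (· ≤ i), c k * u k := by
  rw [lmap, Matrix.toLin'_apply, Finset.sum_filter]
  simp [Matrix.mulVec, dotProduct, ite_mul]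

lemma det_lmap (c : Fin n → ℝ) : LinearMap.det (lmap c) = ∏ k, c k := by
  rw [lmap, LinearMap.det_toLin']
  rw [Matrix.det_of_lowerTriangular _ ?_]
  · simp
  · intro i j h
    have hij : i < j := h
    simpa using fun hji => absurd hji (not_le.mpr hij)

/-- The set of monotone tuples with entries in `[0,1]`. -/
def ordSet (n : ℕ) : Set (Fin n → ℝ) :=
  {t | Monotone t ∧ ∀ i, t i ∈ Set.Icc (0 : ℝ) 1}

lemma measurableSet_mono : MeasurableSet {t : Fin n → ℝ | Monotone t} := by
  have : {t : Fin n → ℝ | Monotone t} = ⋂ (i) (j) (_ : i ≤ j), {t : Fin n → ℝ | t i ≤ t j} := by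
    ext t
    simp only [Set.mem_setOf_eq, Set.mem_iInter]
    exact ⟨fun h i j hij => h hij, fun h a b hab => h a b hab⟩
  rw [this]
  exact MeasurableSet.iInter fun i => MeasurableSet.iInter fun j => MeasurableSet.iInter fun _ =>
    measurableSet_le (measurable_pi_apply i) (measurable_pi_apply j)

lemma measurableSet_ordSet : MeasurableSet (ordSet n) := by
  have : ordSet n = {t : Fin n → ℝ | Monotone t} ∩
      ⋂ i, (fun t : Fin n → ℝ => t i) ⁻¹' Set.Icc (0 : ℝ) 1 := by
    ext t; simp [ordSet]
  rw [this]
  exact measurableSet_mono.inter <| MeasurableSet.iInter fun i =>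
    (measurable_pi_apply i) measurableSet_Icc

lemma volume_hyperplane {ι : Type*} [Fintype ι] {p q : ι} (h : p ≠ q) :
    MeasureTheory.volume {f : ι → ℝ | f p = f q} = 0 := by
  have hset : {f : ι → ℝ | f p = f q} =
      (LinearMap.ker ((LinearMap.proj p : (ι → ℝ) →ₗ[ℝ] ℝ) - LinearMap.proj q) :
        Submodule ℝ (ι → ℝ)) := by
    ext f
    simp [LinearMap.mem_ker, sub_eq_zero, eq_comm]
  rw [hset]
  refine Measure.addHaar_submodule volume _ (fun htop => ?_)
  have := (Submodule.eq_top_iff'.mp htop) (Pi.single p 1)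
  rw [LinearMap.mem_ker, LinearMap.sub_apply, LinearMap.proj_apply, LinearMap.proj_apply,
    Pi.single_eq_same, Pi.single_eq_of_ne h.symm, sub_zero] at this
  exact one_ne_zero this

lemma volume_badSet {ι : Type*} [Fintype ι] :
    MeasureTheory.volume {f : ι → ℝ | ∃ p q, p ≠ q ∧ f p = f q} = 0 := by
  have : {f : ι → ℝ | ∃ p q, p ≠ q ∧ f p = f q} =
      ⋃ (p) (q) (_ : p ≠ q), {f : ι → ℝ | f p = f q} := by
    ext f; simp [Set.mem_iUnion]
  rw [this]
  exact measure_iUnion_null fun p => measure_iUnion_null fun q =>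
    measure_iUnion_null fun hpq => volume_hyperplane hpq

lemma volume_ordSet (n : ℕ) :
    MeasureTheory.volume (ordSet n) = ENNReal.ofReal ((n.factorial : ℝ))⁻¹ := by
  classical
  set A : Equiv.Perm (Fin n) → Set (Fin n → ℝ) :=
    fun σ => {t | Monotone (t ∘ σ) ∧ ∀ i, t i ∈ Set.Icc (0 : ℝ) 1} with hA
  have hmeas : ∀ σ, MeasurableSet (A σ) := by
    intro σ
    have h1 : MeasurableSet {t : Fin n → ℝ | Monotone (t ∘ σ)} := by
      have : {t : Fin n → ℝ | Monotone (t ∘ σ)} =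
          ⋂ (i) (j) (_ : i ≤ j), {t : Fin n → ℝ | t (σ i) ≤ t (σ j)} := by
        ext t
        simp only [Set.mem_setOf_eq, Set.mem_iInter]
        exact ⟨fun h i j hij => h hij, fun h a b hab => h a b hab⟩
      rw [this]
      exact MeasurableSet.iInter fun i => MeasurableSet.iInter fun j =>
        MeasurableSet.iInter fun _ =>
          measurableSet_le (measurable_pi_apply _) (measurable_pi_apply _)
    have h2 : MeasurableSet (⋂ i, (fun t : Fin n → ℝ => t i) ⁻¹' Set.Icc (0 : ℝ) 1) :=
      MeasurableSet.iInter fun i => (measurable_pi_apply i) measurableSet_Icc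
    have : A σ = {t : Fin n → ℝ | Monotone (t ∘ σ)} ∩
        ⋂ i, (fun t : Fin n → ℝ => t i) ⁻¹' Set.Icc (0 : ℝ) 1 := by
      ext t; simp [hA]
    rw [this]; exact h1.inter h2
  have hcover : (Set.pi Set.univ fun _ : Fin n => Set.Icc (0 : ℝ) 1) =
      ⋃ σ ∈ (Finset.univ : Finset (Equiv.Perm (Fin n))), A σ := by
    apply Set.Subset.antisymm
    · intro t ht
      have hmem : ∀ i, t i ∈ Set.Icc (0 : ℝ) 1 := fun i => ht i (Set.mem_univ i)
      exact Set.mem_biUnion (Finset.mem_univ (Tuple.sort t))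
        ⟨Tuple.monotone_sort t, hmem⟩
    · refine Set.iUnion₂_subset fun σ _ => fun t ht => ?_
      intro i _
      exact ht.2 i
  have hdisj : Set.Pairwise ↑(Finset.univ : Finset (Equiv.Perm (Fin n)))
      (Function.onFun (MeasureTheory.AEDisjoint MeasureTheory.volume) A) := by
    intro σ _ τ _ hστ
    refine measure_mono_null (fun t ht => ?_) (volume_badSet (ι := Fin n))
    by_contra hbad
    simp only [Set.mem_setOf_eq, not_exists, not_and] at hbad
    have hinj : Function.Injective t := by
      intro p q hpq
      by_contra hne
      exact hbad p q hne hpq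
    have := Tuple.unique_monotone (f := t) (σ := σ) (τ := τ) ht.1.1 ht.2.1
    exact hστ (Equiv.ext fun i => hinj (congrFun this i))
  have hsum : MeasureTheory.volume (Set.pi Set.univ fun _ : Fin n => Set.Icc (0 : ℝ) 1)
      = ∑ σ : Equiv.Perm (Fin n), MeasureTheory.volume (A σ) := by
    rw [hcover]
    exact measure_biUnion_finset₀ hdisj fun b _ => (hmeas b).nullMeasurableSet
  have hvolC : MeasureTheory.volume (Set.pi Set.univ fun _ : Fin n => Set.Icc (0 : ℝ) 1) = 1 := by
    rw [MeasureTheory.volume_pi_pi]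
    simp [Real.volume_Icc]
  have hAσ : ∀ σ : Equiv.Perm (Fin n), MeasureTheory.volume (A σ) =
      MeasureTheory.volume (ordSet n) := by
    intro σ
    set Ψ := MeasurableEquiv.piCongrLeft (fun _ : Fin n => ℝ) σ.symm with hΨdef
    have hΨ : ∀ (f : Fin n → ℝ) (p : Fin n), Ψ f p = f (σ p) := by
      intro f p
      rw [hΨdef, MeasurableEquiv.coe_piCongrLeft]
      have := Equiv.piCongrLeft_apply_apply (fun _ : Fin n => ℝ) σ.symm f (σ p)
      simpa using this
    have hpre : Ψ ⁻¹' ordSet n = A σ := by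
      ext f
      simp only [Set.mem_preimage, ordSet, Set.mem_setOf_eq, hA]
      constructor
      · rintro ⟨hm, hb⟩
        refine ⟨fun i j hij => ?_, fun i => ?_⟩
        · have := hm hij
          rwa [hΨ, hΨ] at this
        · have := hb (σ.symm i)
          rwa [hΨ, Equiv.apply_symm_apply] at this
      · rintro ⟨hm, hb⟩
        refine ⟨fun i j hij => ?_, fun i => ?_⟩
        · rw [hΨ, hΨ]
          exact hm hij
        · rw [hΨ]
          exact hb _
    have hmp := MeasureTheory.volume_measurePreserving_piCongrLeft (fun _ : Fin n => ℝ) σ.symm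
    have := hmp.measure_preimage (measurableSet_ordSet (n := n)).nullMeasurableSet
    rw [hpre] at this
    exact this
  have hkey : (n.factorial : ℝ≥0∞) * MeasureTheory.volume (ordSet n) = 1 := by
    rw [← hvolC, hsum]
    simp only [hAσ, Finset.sum_const, Finset.card_univ, nsmul_eq_mul]
    congr 1
    rw [Fintype.card_perm, Fintype.card_fin]
  have hne : (n.factorial : ℝ≥0∞) ≠ 0 := by
    exact_mod_cast Nat.factorial_ne_zero n
  have htop : (n.factorial : ℝ≥0∞) ≠ ⊤ := ENNReal.natCast_ne_top _
  have : MeasureTheory.volume (ordSet n) = (n.factorial : ℝ≥0∞)⁻¹ := by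
    have h2 := congrArg (fun z => (n.factorial : ℝ≥0∞)⁻¹ * z) hkey
    simpa [← mul_assoc, ENNReal.inv_mul_cancel hne htop] using h2
  rw [this, ENNReal.ofReal_inv_of_pos (by positivity), ENNReal.ofReal_natCast]

lemma lmap_mono_nonneg {c u : Fin n → ℝ} (hc : ∀ k, 0 ≤ c k) (hu : ∀ k, 0 ≤ u k) :
    Monotone (lmap c u) ∧ ∀ i, 0 ≤ lmap c u i := by
  constructor
  · intro i j hij
    rw [lmap_apply, lmap_apply]
    apply Finset.sum_le_sum_of_subset_of_nonneg
    · intro k hk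
      simp only [Finset.mem_filter, Finset.mem_univ, true_and] at *
      exact hk.trans hij
    · intro k _ _
      exact mul_nonneg (hc k) (hu k)
  · intro i
    rw [lmap_apply]
    exact Finset.sum_nonneg fun k _ => mul_nonneg (hc k) (hu k)

lemma lmap_le_total {c u : Fin n → ℝ} (hc : ∀ k, 0 ≤ c k) (hu : ∀ k, 0 ≤ u k) (i : Fin n) :
    lmap c u i ≤ ∑ k, c k * u k := by
  rw [lmap_apply]
  exact Finset.sum_le_sum_of_subset_of_nonneg (Finset.filter_subset _ _)
    fun k _ _ => mul_nonneg (hc k) (hu k)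

lemma nonneg_of_lmap {c u : Fin n → ℝ} (hc : ∀ k, 0 < c k)
    (hmono : Monotone (lmap c u)) (h0 : ∀ i, 0 ≤ lmap c u i) (k : Fin n) : 0 ≤ u k := by
  have key : 0 ≤ c k * u k := by
    rcases Nat.eq_zero_or_pos k.val with hk | hk
    · have hsingle : Finset.univ.filter (· ≤ k) = {k} := by
        ext j
        simp only [Finset.mem_filter, Finset.mem_univ, true_and, Finset.mem_singleton]
        constructor
        · intro hj
          have := Fin.le_def.mp hj
          exact Fin.ext (by omega)
        · rintro rfl
          exact le_refl _
      have hk0 := h0 k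
      rwa [lmap_apply, hsingle, Finset.sum_singleton] at hk0
    · set k' : Fin n := ⟨k.val - 1, by omega⟩ with hk'def
      have hk'val : (k' : ℕ) = k.val - 1 := rfl
      have hsplit : Finset.univ.filter (· ≤ k) = insert k (Finset.univ.filter (· ≤ k')) := by
        ext j
        simp only [Finset.mem_filter, Finset.mem_univ, true_and, Finset.mem_insert]
        rw [Fin.le_def, Fin.le_def, Fin.ext_iff, hk'val]
        omega
      have hnotmem : k ∉ Finset.univ.filter (· ≤ k') := by
        simp only [Finset.mem_filter, Finset.mem_univ, true_and, Fin.le_def, hk'val]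
        omega
      have hmk := hmono (show k' ≤ k from Fin.le_def.mpr (by rw [hk'val]; omega))
      have heq : lmap c u k = c k * u k + lmap c u k' := by
        rw [lmap_apply, lmap_apply, hsplit, Finset.sum_insert hnotmem]
      linarith
  exact nonneg_of_mul_nonneg_right key (hc k)

lemma sum_eq_lmap_last {c u : Fin n → ℝ} (hn : 0 < n) :
    ∑ k, c k * u k = lmap c u ⟨n - 1, by omega⟩ := by
  rw [lmap_apply, Finset.filter_true_of_mem fun j _ => by
    rw [Fin.le_def]; show j.val ≤ n - 1; have := j.isLt; omega]

lemma preimage_ordSet {c : Fin n → ℝ} (hc : ∀ k, 0 < c k) :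
    lmap c ⁻¹' ordSet n = {u : Fin n → ℝ | (∀ k, 0 ≤ u k) ∧ ∑ k, c k * u k ≤ 1} := by
  ext u
  simp only [Set.mem_preimage, ordSet, Set.mem_setOf_eq, Set.mem_Icc]
  constructor
  · rintro ⟨hm, hb⟩
    refine ⟨nonneg_of_lmap hc hm fun i => (hb i).1, ?_⟩
    rcases Nat.eq_zero_or_pos n with h0 | h0
    · subst h0
      simp
    · rw [sum_eq_lmap_last h0]
      exact (hb _).2
  · rintro ⟨hu, hs⟩
    obtain ⟨hm, h0⟩ := lmap_mono_nonneg (fun k => (hc k).le) hu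
    exact ⟨hm, fun i => ⟨h0 i, le_trans (lmap_le_total (fun k => (hc k).le) hu i) hs⟩⟩

lemma volume_simplex (c : Fin n → ℝ) (hc : ∀ k, 0 < c k) :
    MeasureTheory.volume {u : Fin n → ℝ | (∀ k, 0 ≤ u k) ∧ ∑ k, c k * u k ≤ 1} =
      ENNReal.ofReal ((∏ k, c k)⁻¹ * ((n.factorial : ℝ))⁻¹) := by
  have hprod : 0 < ∏ k, c k := Finset.prod_pos fun k _ => hc k
  have hdet : LinearMap.det (lmap c) = ∏ k, c k := det_lmap c
  have h := MeasureTheory.Measure.addHaar_preimage_linearMap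
    (E := Fin n → ℝ) MeasureTheory.volume (f := lmap c) (by rw [hdet]; exact hprod.ne') (ordSet n)
  rw [preimage_ordSet hc, hdet, volume_ordSet] at h
  rw [h, abs_of_pos (inv_pos.mpr hprod), ← ENNReal.ofReal_mul (inv_pos.mpr hprod).le]

lemma volume_Tset (a : Fin n → ℝ) (ha : ∀ i, 0 < a i) :
    MeasureTheory.volume
        {t : Fin n → ℝ | Monotone t ∧ (∀ i, 0 ≤ t i) ∧ ∑ i, a i * t i ≤ 1} =
      ENNReal.ofReal ((∏ i, ∑ j ∈ Finset.univ.filter (fun j => i ≤ j), a j)⁻¹ *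
        ((n.factorial : ℝ))⁻¹) := by
  classical
  set c : Fin n → ℝ := fun k => ∑ j ∈ Finset.univ.filter (fun j => k ≤ j), a j with hcdef
  have hc : ∀ k, 0 < c k := fun k =>
    Finset.sum_pos (fun j _ => ha j) ⟨k, by simp⟩
  have hswap : ∀ u : Fin n → ℝ,
      ∑ i, a i * lmap (fun _ => (1 : ℝ)) u i = ∑ k, c k * u k := by
    intro u
    simp only [lmap_apply, one_mul]
    calc ∑ i, a i * ∑ k ∈ Finset.univ.filter (· ≤ i), u k
        = ∑ i, ∑ k, if k ≤ i then a i * u k else 0 := by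
          simp_rw [Finset.mul_sum, Finset.sum_filter]
      _ = ∑ k, ∑ i, if k ≤ i then a i * u k else 0 := Finset.sum_comm
      _ = ∑ k, c k * u k := by
          simp_rw [hcdef, Finset.sum_mul, Finset.sum_filter]
  have hpre : lmap (fun _ : Fin n => (1 : ℝ)) ⁻¹'
      {t : Fin n → ℝ | Monotone t ∧ (∀ i, 0 ≤ t i) ∧ ∑ i, a i * t i ≤ 1}
      = {u : Fin n → ℝ | (∀ k, 0 ≤ u k) ∧ ∑ k, c k * u k ≤ 1} := by
    ext u
    simp only [Set.mem_preimage, Set.mem_setOf_eq]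
    constructor
    · rintro ⟨hm, h0, hs⟩
      refine ⟨nonneg_of_lmap (fun _ => one_pos) hm h0, ?_⟩
      rw [← hswap u]
      exact hs
    · rintro ⟨hu, hs⟩
      obtain ⟨hm, h0⟩ := lmap_mono_nonneg (fun _ => zero_le_one) hu
      exact ⟨hm, h0, by rw [hswap u]; exact hs⟩
  have hdet1 : LinearMap.det (lmap (fun _ : Fin n => (1 : ℝ))) = 1 := by
    rw [det_lmap]; simp
  have h := MeasureTheory.Measure.addHaar_preimage_linearMap
    (E := Fin n → ℝ) MeasureTheory.volume (f := lmap (fun _ : Fin n => (1 : ℝ)))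
    (by rw [hdet1]; norm_num)
    {t : Fin n → ℝ | Monotone t ∧ (∀ i, 0 ≤ t i) ∧ ∑ i, a i * t i ≤ 1}
  rw [hpre, hdet1, volume_simplex c hc] at h
  simpa using h.symm

end RPPAux

/-- The RPP polytope of a d-complete poset `P`, cut out by `s ≥ 0`,
order-reversal, and `∑ x_{D(p)} s_p ≤ 1`, has volume
`(1/n!) ∑_T weight T` over linear extensions `T`. -/
theorem volume_RPP_polytope {P : Type*} [PartialOrder P] [Fintype P]
    (hP : IsDComplete P) (x : Quotient (diagSetoid P) → ℝ) (hx : ∀ D, 0 < x D) :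
    MeasureTheory.volume {s : P → ℝ |
        (∀ p, 0 ≤ s p) ∧ (∀ p q : P, p ≤ q → s q ≤ s p) ∧
        ∑ p : P, x (Quotient.mk (diagSetoid P) p) * s p ≤ 1}
      = ENNReal.ofReal (((Nat.factorial (Fintype.card P) : ℝ))⁻¹ *
          ∑ e ∈ Finset.univ.filter
              (fun e : Fin (Fintype.card P) ≃ P => IsLinExt e),
            (∏ i : Fin (Fintype.card P),
              ∑ j ∈ Finset.univ.filter (fun j => i ≤ j),
                x (Quotient.mk (diagSetoid P) (e j)))⁻¹) := by
  classical
  set RS : Set (P → ℝ) := {s : P → ℝ |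
      (∀ p, 0 ≤ s p) ∧ (∀ p q : P, p ≤ q → s q ≤ s p) ∧
      ∑ p : P, x (Quotient.mk (diagSetoid P) p) * s p ≤ 1} with hRS
  set F : Finset (Fin (Fintype.card P) ≃ P) :=
    Finset.univ.filter (fun e : Fin (Fintype.card P) ≃ P => IsLinExt e) with hF
  set A : (Fin (Fintype.card P) ≃ P) → Set (P → ℝ) := fun e =>
    {s : P → ℝ | (∀ i j : Fin (Fintype.card P), i ≤ j → s (e i) ≤ s (e j)) ∧
      (∀ p, 0 ≤ s p) ∧ ∑ p : P, x (Quotient.mk (diagSetoid P) p) * s p ≤ 1} with hA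
  -- measurability of the pieces
  have hmeasA : ∀ e, MeasurableSet (A e) := by
    intro e
    have h1 : MeasurableSet
        {s : P → ℝ | ∀ i j : Fin (Fintype.card P), i ≤ j → s (e i) ≤ s (e j)} := by
      have heq : {s : P → ℝ | ∀ i j : Fin (Fintype.card P), i ≤ j → s (e i) ≤ s (e j)} =
          ⋂ (i) (j) (_ : i ≤ j), {s : P → ℝ | s (e i) ≤ s (e j)} := by
        ext s
        simp only [Set.mem_setOf_eq, Set.mem_iInter]
      rw [heq]
      exact MeasurableSet.iInter fun i => MeasurableSet.iInter fun j =>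
        MeasurableSet.iInter fun _ =>
          measurableSet_le (measurable_pi_apply _) (measurable_pi_apply _)
    have h2 : MeasurableSet {s : P → ℝ | ∀ p, 0 ≤ s p} := by
      have heq : {s : P → ℝ | ∀ p, 0 ≤ s p} = ⋂ p, {s : P → ℝ | 0 ≤ s p} := by
        ext s
        simp only [Set.mem_setOf_eq, Set.mem_iInter]
      rw [heq]
      exact MeasurableSet.iInter fun p =>
        measurableSet_le measurable_const (measurable_pi_apply _)
    have h3 : MeasurableSet
        {s : P → ℝ | ∑ p : P, x (Quotient.mk (diagSetoid P) p) * s p ≤ 1} :=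
      measurableSet_le (Finset.measurable_sum _ fun p _ =>
        ((measurable_pi_apply p).const_mul _)) measurable_const
    have heq : A e = {s : P → ℝ | ∀ i j : Fin (Fintype.card P), i ≤ j → s (e i) ≤ s (e j)} ∩
        ({s : P → ℝ | ∀ p, 0 ≤ s p} ∩
          {s : P → ℝ | ∑ p : P, x (Quotient.mk (diagSetoid P) p) * s p ≤ 1}) := rfl
    rw [heq]
    exact h1.inter (h2.inter h3)
  -- each piece coming from a linear extension sits inside the polytope
  have hsub : ∀ e : Fin (Fintype.card P) ≃ P, IsLinExt e → A e ⊆ RS := by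
    intro e he s hs
    obtain ⟨h1, h2, h3⟩ := hs
    refine ⟨h2, fun p q hpq => ?_, h3⟩
    rcases eq_or_lt_of_le hpq with rfl | hlt
    · exact le_refl _
    · have hij : e (e.symm p) < e (e.symm q) := by simpa using hlt
      have hji := he _ _ hij
      have h4 := h1 _ _ hji.le
      simpa using h4
  -- the polytope is covered by the pieces together with a null set
  have hcov : RS ⊆ (⋃ e ∈ F, A e) ∪ {f : P → ℝ | ∃ p q, p ≠ q ∧ f p = f q} := by
    intro s hs
    by_cases hbad : ∃ p q : P, p ≠ q ∧ s p = s q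
    · exact Or.inr hbad
    · left
      have hinj : ∀ p q : P, s p = s q → p = q := by
        intro p q h
        by_contra hne
        exact hbad ⟨p, q, hne, h⟩
      set g : Fin (Fintype.card P) ≃ P := (Fintype.equivFin P).symm with hg
      set e : Fin (Fintype.card P) ≃ P := (Tuple.sort (s ∘ g)).trans g with he
      have hmono : Monotone (fun i => s (e i)) := by
        have := Tuple.monotone_sort (s ∘ g)
        simpa [he, Function.comp_def] using this
      have hlin : IsLinExt e := by
        intro i j hij
        by_contra hji
        have hmle := hmono (not_lt.mp hji)
        have hlt : s (e j) < s (e i) := by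
          have hle := hs.2.1 _ _ hij.le
          rcases lt_or_eq_of_le hle with h | h
          · exact h
          · exact absurd (hinj _ _ h) (ne_of_lt hij).symm
        simp only at hmle
        linarith
      have heF : e ∈ F := by
        rw [hF, Finset.mem_filter]
        exact ⟨Finset.mem_univ _, hlin⟩
      have hsA : s ∈ A e := ⟨fun i j hij => hmono hij, hs.1, hs.2.2⟩
      exact Set.mem_biUnion heF hsA
  -- the pieces are a.e. disjoint
  have hdisj : Set.Pairwise ↑F
      (Function.onFun (MeasureTheory.AEDisjoint MeasureTheory.volume) A) := by
    intro e _ f _ hef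
    show MeasureTheory.volume (A e ∩ A f) = 0
    refine MeasureTheory.measure_mono_null (fun s hs => ?_) (RPPAux.volume_badSet (ι := P))
    by_contra hbad
    simp only [Set.mem_setOf_eq, not_exists, not_and] at hbad
    have hinj : Function.Injective s := fun p q h => by
      by_contra hne
      exact hbad p q hne h
    have h1 : Monotone ((s ∘ e) ∘
        ((Equiv.refl (Fin (Fintype.card P))) : Equiv.Perm (Fin (Fintype.card P)))) := by
      intro i j hij
      exact hs.1.1 i j hij
    have h2 : Monotone ((s ∘ e) ∘
        ((f.trans e.symm) : Equiv.Perm (Fin (Fintype.card P)))) := by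
      intro i j hij
      simp only [Function.comp_apply, Equiv.trans_apply, Equiv.apply_symm_apply]
      exact hs.2.1 i j hij
    have h3 := Tuple.unique_monotone h1 h2
    refine hef (Equiv.ext fun i => ?_)
    have h4 := congrFun h3 i
    simp only [Function.comp_apply, Equiv.refl_apply, Equiv.trans_apply,
      Equiv.apply_symm_apply] at h4
    exact hinj h4
  -- the volume of each piece
  have hvolA : ∀ e : Fin (Fintype.card P) ≃ P, MeasureTheory.volume (A e) =
      ENNReal.ofReal ((∏ i : Fin (Fintype.card P),
        ∑ j ∈ Finset.univ.filter (fun j => i ≤ j),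
          x (Quotient.mk (diagSetoid P) (e j)))⁻¹ *
        (((Fintype.card P).factorial : ℝ))⁻¹) := by
    intro e
    set a : Fin (Fintype.card P) → ℝ :=
      fun i => x (Quotient.mk (diagSetoid P) (e i)) with ha
    set Ψ := MeasurableEquiv.piCongrLeft (fun _ : P => ℝ) e with hΨdef
    have hΨ : ∀ (f : Fin (Fintype.card P) → ℝ) (i : Fin (Fintype.card P)),
        Ψ f (e i) = f i := by
      intro f i
      rw [hΨdef, MeasurableEquiv.coe_piCongrLeft]
      exact Equiv.piCongrLeft_apply_apply (fun _ : P => ℝ) e f i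
    have hpre : Ψ ⁻¹' A e = {t : Fin (Fintype.card P) → ℝ |
        Monotone t ∧ (∀ i, 0 ≤ t i) ∧ ∑ i, a i * t i ≤ 1} := by
      ext f
      simp only [Set.mem_preimage, hA, Set.mem_setOf_eq]
      have hsum : ∑ p : P, x (Quotient.mk (diagSetoid P) p) * Ψ f p = ∑ i, a i * f i := by
        rw [← Equiv.sum_comp e (fun p => x (Quotient.mk (diagSetoid P) p) * Ψ f p)]
        exact Finset.sum_congr rfl fun i _ => by rw [hΨ, ha]
      constructor
      · rintro ⟨h1, h2, h3⟩
        refine ⟨fun i j hij => ?_, fun i => ?_, ?_⟩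
        · have := h1 i j hij
          rwa [hΨ, hΨ] at this
        · have := h2 (e i)
          rwa [hΨ] at this
        · rwa [hsum] at h3
      · rintro ⟨h1, h2, h3⟩
        refine ⟨fun i j hij => ?_, fun p => ?_, ?_⟩
        · rw [hΨ, hΨ]
          exact h1 hij
        · have h4 := hΨ f (e.symm p)
          rw [Equiv.apply_symm_apply] at h4
          rw [h4]
          exact h2 _
        · rwa [hsum]
    have hmp := MeasureTheory.volume_measurePreserving_piCongrLeft (fun _ : P => ℝ) e
    have hvol := hmp.measure_preimage (hmeasA e).nullMeasurableSet
    rw [hpre] at hvol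
    rw [← hvol]
    have := RPPAux.volume_Tset a (fun i => hx _)
    simpa [ha] using this
  -- sum up
  have hU : MeasureTheory.volume (⋃ e ∈ F, A e) = ∑ e ∈ F, MeasureTheory.volume (A e) :=
    MeasureTheory.measure_biUnion_finset₀ hdisj fun b _ => (hmeasA b).nullMeasurableSet
  have hvolR : MeasureTheory.volume RS = ∑ e ∈ F, MeasureTheory.volume (A e) := by
    refine le_antisymm ?_ ?_
    · calc MeasureTheory.volume RS
          ≤ MeasureTheory.volume ((⋃ e ∈ F, A e) ∪ {f : P → ℝ | ∃ p q, p ≠ q ∧ f p = f q}) :=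
            MeasureTheory.measure_mono hcov
        _ ≤ MeasureTheory.volume (⋃ e ∈ F, A e) +
            MeasureTheory.volume {f : P → ℝ | ∃ p q, p ≠ q ∧ f p = f q} :=
            MeasureTheory.measure_union_le _ _
        _ = ∑ e ∈ F, MeasureTheory.volume (A e) := by
            rw [RPPAux.volume_badSet, add_zero, hU]
    · rw [← hU]
      refine MeasureTheory.measure_mono (Set.iUnion₂_subset fun e he => hsub e ?_)
      rw [hF, Finset.mem_filter] at he
      exact he.2
  rw [hvolR, Finset.sum_congr rfl (fun e _ => hvolA e),
    ← ENNReal.ofReal_sum_of_nonneg (fun e _ => ?_)]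
  · congr 1
    rw [Finset.mul_sum]
    refine Finset.sum_congr rfl fun e _ => ?_
    rw [mul_comm]
  · have h1 : 0 < ∏ i : Fin (Fintype.card P),
        ∑ j ∈ Finset.univ.filter (fun j => i ≤ j), x (Quotient.mk (diagSetoid P) (e j)) :=
      Finset.prod_pos fun i _ => Finset.sum_pos (fun j _ => hx _) ⟨i, by simp⟩
    positivity
end
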